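/- arXiv:2202.10999 — 4 statements merged into one kernel-verified Lean document; each statement's English description precedes it below -/
import Mathlib

section
/- Let φ_{(i,t)} (for (i,t) ∈ Z^{d+1}) be a collection of monotone local maps from {0,1}^{Z^d} to {0,1} (a monotonic flow). Call a space-time configuration x: Z^{d+1} → {0,1} a trajectory if x_t(i) = φ_{(i,t)}(θ_i x_{t−1}) for all (i,t), where (θ_i y)(j) := y(i+j). Then there exist trajectories x̲ and x̄ such that every trajectory x satisfies x̲ ≤ x ≤ x̄ pointwise, and x̲, x̄ are uniquely determined by this property. -/
abbrev Conf (d : ℕ) := (Fin d → ℤ) → Bool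

def IsLocal {d : ℕ} (φ : Conf d → Bool) : Prop :=
  ∃ Δ : Finset (Fin d → ℤ), ∀ x y : Conf d, (∀ i ∈ Δ, x i = y i) → φ x = φ y

def IsMonotoneMap {d : ℕ} (φ : Conf d → Bool) : Prop :=
  ∀ x y : Conf d, (∀ i, x i ≤ y i) → φ x ≤ φ y

/-- The translation operator `(θ_i y)(j) = y(i + j)`. -/
def shift {d : ℕ} (i : Fin d → ℤ) (y : Conf d) : Conf d := fun j => y (i + j)

/-- A trajectory of the monotonic flow `Φ`: `x_t(i) = Φ_{(i,t)}(θ_i x_{t-1})`. -/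
def IsTrajectory {d : ℕ} (Φ : (Fin d → ℤ) → ℤ → (Conf d → Bool)) (x : ℤ → Conf d) : Prop :=
  ∀ (i : Fin d → ℤ) (t : ℤ), x t i = Φ i t (shift i (x (t - 1)))

attribute [local instance] Classical.propDecidable

/-- One step of the flow at time `t`. -/
def flowStep {d : ℕ} (Φ : (Fin d → ℤ) → ℤ → (Conf d → Bool)) (t : ℤ) (y : Conf d) : Conf d :=
  fun i => Φ i t (shift i y)

/-- Run `n` steps ending at time `t`, starting from the all-`b` configuration. -/
def flowIter {d : ℕ} (Φ : (Fin d → ℤ) → ℤ → (Conf d → Bool)) (b : Bool) :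
    ℕ → ℤ → Conf d
  | 0, _ => fun _ => b
  | n + 1, t => flowStep Φ t (flowIter Φ b n (t - 1))

lemma flowStep_mono {d : ℕ} (Φ : (Fin d → ℤ) → ℤ → (Conf d → Bool))
    (hmono : ∀ i t, IsMonotoneMap (Φ i t)) (t : ℤ) {y z : Conf d}
    (h : ∀ i, y i ≤ z i) : ∀ i, flowStep Φ t y i ≤ flowStep Φ t z i := by
  intro i
  exact hmono i t _ _ (fun j => h (i + j))

lemma flowIter_true_antitone {d : ℕ} (Φ : (Fin d → ℤ) → ℤ → (Conf d → Bool))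
    (hmono : ∀ i t, IsMonotoneMap (Φ i t)) :
    ∀ n t i, flowIter Φ true (n + 1) t i ≤ flowIter Φ true n t i := by
  intro n
  induction n with
  | zero => intro t i; exact Bool.le_true _
  | succ n ih =>
    intro t i
    exact flowStep_mono Φ hmono t (fun j => ih (t - 1) j) i

lemma flowIter_false_monotone {d : ℕ} (Φ : (Fin d → ℤ) → ℤ → (Conf d → Bool))
    (hmono : ∀ i t, IsMonotoneMap (Φ i t)) :
    ∀ n t i, flowIter Φ false n t i ≤ flowIter Φ false (n + 1) t i := by
  intro n
  induction n with
  | zero => intro t i; exact Bool.false_le _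
  | succ n ih =>
    intro t i
    exact flowStep_mono Φ hmono t (fun j => ih (t - 1) j) i

lemma antitone_stab (f : ℕ → Bool) (hf : ∀ n, f (n + 1) ≤ f n) :
    ∃ N, ∀ n ≥ N, f n = decide (∀ m, f m = true) := by
  have hanti : Antitone f := antitone_nat_of_succ_le hf
  by_cases h : ∀ m, f m = true
  · exact ⟨0, fun n _ => by simp [h n, h]⟩
  · push_neg at h
    obtain ⟨N, hN⟩ := h
    refine ⟨N, fun n hn => ?_⟩
    have h1 : f n ≤ f N := hanti hn
    have h2 : f N = false := Bool.eq_false_iff.mpr hN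
    rw [h2] at h1
    have h3 : f n = false := by revert h1; cases f n <;> simp
    have h4 : ¬ (∀ m, f m = true) := fun h => hN (h N)
    simp [h3, h4]

lemma monotone_stab (f : ℕ → Bool) (hf : ∀ n, f n ≤ f (n + 1)) :
    ∃ N, ∀ n ≥ N, f n = decide (∃ m, f m = true) := by
  have hmono : Monotone f := monotone_nat_of_le_succ hf
  by_cases h : ∃ m, f m = true
  · obtain ⟨N, hN⟩ := h
    refine ⟨N, fun n hn => ?_⟩
    have h1 : f N ≤ f n := hmono hn
    rw [hN] at h1
    have h3 : f n = true := Bool.le_iff_imp.mp h1 rfl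
    have h4 : ∃ m, f m = true := ⟨N, hN⟩
    simp [h3, h4]
  · push_neg at h
    refine ⟨0, fun n _ => ?_⟩
    have h3 : f n = false := Bool.eq_false_iff.mpr (h n)
    have h4 : ¬ ∃ m, f m = true := fun ⟨m, hm⟩ => h m hm
    simp [h3, h4]

/-- The maximal trajectory candidate. -/
noncomputable def upperTraj {d : ℕ} (Φ : (Fin d → ℤ) → ℤ → (Conf d → Bool)) : ℤ → Conf d :=
  fun t i => decide (∀ n, flowIter Φ true n t i = true)

/-- The minimal trajectory candidate. -/
noncomputable def lowerTraj {d : ℕ} (Φ : (Fin d → ℤ) → ℤ → (Conf d → Bool)) : ℤ → Conf d :=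
  fun t i => decide (∃ n, flowIter Φ false n t i = true)

lemma upperTraj_stab {d : ℕ} (Φ : (Fin d → ℤ) → ℤ → (Conf d → Bool))
    (hmono : ∀ i t, IsMonotoneMap (Φ i t)) (t : ℤ) (i : Fin d → ℤ) :
    ∃ N, ∀ n ≥ N, flowIter Φ true n t i = upperTraj Φ t i :=
  antitone_stab (fun n => flowIter Φ true n t i)
    (fun n => flowIter_true_antitone Φ hmono n t i)

lemma lowerTraj_stab {d : ℕ} (Φ : (Fin d → ℤ) → ℤ → (Conf d → Bool))
    (hmono : ∀ i t, IsMonotoneMap (Φ i t)) (t : ℤ) (i : Fin d → ℤ) :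
    ∃ N, ∀ n ≥ N, flowIter Φ false n t i = lowerTraj Φ t i :=
  monotone_stab (fun n => flowIter Φ false n t i)
    (fun n => flowIter_false_monotone Φ hmono n t i)

/-- Generic argument: if a space-time configuration is a pointwise stabilized limit of
the iterates, then it is a trajectory. -/
lemma stab_isTrajectory {d : ℕ} (Φ : (Fin d → ℤ) → ℤ → (Conf d → Bool))
    (hloc : ∀ i t, IsLocal (Φ i t)) (b : Bool) (z : ℤ → Conf d)
    (hstab : ∀ t i, ∃ N, ∀ n ≥ N, flowIter Φ b n t i = z t i) :
    IsTrajectory Φ z := by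
  intro i t
  obtain ⟨Δ, hΔ⟩ := hloc i t
  -- choose stabilization bounds for each needed coordinate of x (t-1)
  choose g hg using fun j : Fin d → ℤ => hstab (t - 1) (i + j)
  obtain ⟨N0, hN0⟩ := hstab t i
  set N : ℕ := max N0 (Δ.sup g) with hN
  have h1 : flowIter Φ b (N + 1) t i = z t i := hN0 (N + 1) (by omega)
  have h2 : Φ i t (shift i (flowIter Φ b N (t - 1))) = Φ i t (shift i (z (t - 1))) := by
    apply hΔ
    intro j hj
    have hgj : g j ≤ N := le_trans (Finset.le_sup hj) (le_max_right _ _)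
    exact hg j N hgj
  have h3 : flowIter Φ b (N + 1) t i = Φ i t (shift i (flowIter Φ b N (t - 1))) := rfl
  rw [← h1, h3, h2]

lemma traj_le_iter {d : ℕ} (Φ : (Fin d → ℤ) → ℤ → (Conf d → Bool))
    (hmono : ∀ i t, IsMonotoneMap (Φ i t)) (x : ℤ → Conf d) (hx : IsTrajectory Φ x) :
    ∀ n t i, x t i ≤ flowIter Φ true n t i := by
  intro n
  induction n with
  | zero => intro t i; exact Bool.le_true _
  | succ n ih =>
    intro t i
    rw [hx i t]
    exact flowStep_mono Φ hmono t (fun j => ih (t - 1) j) i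

lemma iter_le_traj {d : ℕ} (Φ : (Fin d → ℤ) → ℤ → (Conf d → Bool))
    (hmono : ∀ i t, IsMonotoneMap (Φ i t)) (x : ℤ → Conf d) (hx : IsTrajectory Φ x) :
    ∀ n t i, flowIter Φ false n t i ≤ x t i := by
  intro n
  induction n with
  | zero => intro t i; exact Bool.false_le _
  | succ n ih =>
    intro t i
    rw [hx i t]
    exact flowStep_mono Φ hmono t (fun j => ih (t - 1) j) i

/-- Existence and uniqueness of the minimal and maximal trajectories of a
monotonic flow: a pair of trajectories bounding all trajectories pointwise. -/
theorem stmt3 {d : ℕ} (Φ : (Fin d → ℤ) → ℤ → (Conf d → Bool))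
    (hloc : ∀ i t, IsLocal (Φ i t)) (hmono : ∀ i t, IsMonotoneMap (Φ i t)) :
    ∃! lu : (ℤ → Conf d) × (ℤ → Conf d),
      IsTrajectory Φ lu.1 ∧ IsTrajectory Φ lu.2 ∧
      ∀ x : ℤ → Conf d, IsTrajectory Φ x →
        ∀ (t : ℤ) (i : Fin d → ℤ), lu.1 t i ≤ x t i ∧ x t i ≤ lu.2 t i := by
  have hlowtraj : IsTrajectory Φ (lowerTraj Φ) :=
    stab_isTrajectory Φ hloc false _ (fun t i => lowerTraj_stab Φ hmono t i)
  have huptraj : IsTrajectory Φ (upperTraj Φ) :=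
    stab_isTrajectory Φ hloc true _ (fun t i => upperTraj_stab Φ hmono t i)
  have hsand : ∀ x : ℤ → Conf d, IsTrajectory Φ x →
      ∀ (t : ℤ) (i : Fin d → ℤ), lowerTraj Φ t i ≤ x t i ∧ x t i ≤ upperTraj Φ t i := by
    intro x hx t i
    constructor
    · rw [Bool.le_iff_imp]
      intro h
      rw [lowerTraj, decide_eq_true_iff] at h
      obtain ⟨n, hn⟩ := h
      have := iter_le_traj Φ hmono x hx n t i
      rw [hn] at this
      exact Bool.le_iff_imp.mp this rfl
    · rw [Bool.le_iff_imp]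
      intro h
      rw [upperTraj, decide_eq_true_iff]
      intro n
      have := traj_le_iter Φ hmono x hx n t i
      rw [h] at this
      exact Bool.le_iff_imp.mp this rfl
  refine ⟨(lowerTraj Φ, upperTraj Φ), ⟨hlowtraj, huptraj, hsand⟩, ?_⟩
  rintro ⟨l, u⟩ ⟨hl, hu, hs⟩
  have h1 : l = lowerTraj Φ := by
    funext t i
    exact le_antisymm ((hs (lowerTraj Φ) hlowtraj t i).1) ((hsand l hl t i).1)
  have h2 : u = upperTraj Φ := by
    funext t i
    exact le_antisymm ((hsand u hu t i).2) ((hs (upperTraj Φ) huptraj t i).2)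
  simp [h1, h2]
end

section
/- (Edge bound.) Let φ be a non-constant monotone local map, σ ≥ 2, let A_s(φ) ∈ 𝒜(φ) for 1 ≤ s ≤ σ, and let L be a polar function of dimension σ. Define ε_s := inf_{i ∈ A_s(φ)} L_s(i), ε := Σ_s ε_s, B(φ) := ∪_s A_s(φ), R_s := − inf_{i ∈ B(φ)} L_s(i), R := Σ_s R_s, and assume ε > 0. Let T = (V, ℰ, v_∘, ψ) be a Toom contour rooted at (0,0) such that ψ⃗(w) − ψ⃗(v) ∈ A_s(φ) for all edges (v,w) of charge s starting at an internal vertex or the root, and ψ⃗(w) − ψ⃗(v) ∈ B(φ) for all edges starting at sources other than the root. Let n_e(T) := |E⃗_1| denote the number of edges of each charge and n_∗(T) := |V_∗| the number of sinks. Then n_e(T) ≤ (1 + R/ε)(n_∗(T) − 1). -/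
def ind {d : ℕ} (A : Finset (Fin d → ℤ)) : Conf d := fun i => decide (i ∈ A)

/-- `𝒜(φ)`: minimal finite sets `A` with `φ(1_A) = 1`. -/
def minUp {d : ℕ} (φ : Conf d → Bool) : Set (Finset (Fin d → ℤ)) :=
  {A | φ (ind A) = true ∧ ∀ B ⊆ A, φ (ind B) = true → B = A}

/-- The coercion `ℤ^d → ℝ^d`. -/
def toR {d : ℕ} (i : Fin d → ℤ) : Fin d → ℝ := fun k => (i k : ℝ)
/-- Directed edges of type `s` entering `v`. -/
def inE {V : Type*} {σ : ℕ} (E : Fin σ → Set (V × V)) (s : Fin σ) (v : V) : Set (V × V) :=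
  {e ∈ E s | e.2 = v}

/-- Directed edges of type `s` leaving `v`. -/
def outE {V : Type*} {σ : ℕ} (E : Fin σ → Set (V × V)) (s : Fin σ) (v : V) : Set (V × V) :=
  {e ∈ E s | e.1 = v}

/-- A Toom graph with `σ` charges: every vertex is isolated, a source, a sink,
or an internal vertex of some charge `s`. -/
def IsToomGraph {V : Type*} {σ : ℕ} (E : Fin σ → Set (V × V)) : Prop :=
  ∀ v : V,
    (∀ s, inE E s v = ∅ ∧ outE E s v = ∅) ∨
    (∀ s, inE E s v = ∅ ∧ (outE E s v).ncard = 1) ∨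
    (∀ s, (inE E s v).ncard = 1 ∧ outE E s v = ∅) ∨
    (∃ s, (inE E s v).ncard = 1 ∧ (outE E s v).ncard = 1 ∧
      ∀ l, l ≠ s → inE E l v = ∅ ∧ outE E l v = ∅)

/-- `V_∘`: the set of sources (no incoming edges of any type). -/
def sources {V : Type*} {σ : ℕ} (E : Fin σ → Set (V × V)) : Set V :=
  {v | ∀ s, inE E s v = ∅}

/-- `V_∗`: the set of sinks (no outgoing edges of any type). -/
def sinks {V : Type*} {σ : ℕ} (E : Fin σ → Set (V × V)) : Set V :=
  {v | ∀ s, outE E s v = ∅}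

/-- `V_s`: the set of internal vertices of charge `s`. -/
def internals {V : Type*} {σ : ℕ} (E : Fin σ → Set (V × V)) (s : Fin σ) : Set V :=
  {v | (inE E s v).ncard = 1 ∧ (outE E s v).ncard = 1}

/-- An embedding of a Toom graph into space-time `ℤ^d × ℤ`: time decreases by
exactly `1` along every directed edge, sinks do not overlap with any other
vertex, and internal vertices of the same charge do not overlap. -/
def IsEmbedding {V : Type*} {σ d : ℕ} (E : Fin σ → Set (V × V))
    (ψ : V → (Fin d → ℤ) × ℤ) : Prop :=
  (∀ s, ∀ e ∈ E s, (ψ e.2).2 = (ψ e.1).2 - 1) ∧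
  (∀ v ∈ sinks E, ∀ w : V, w ≠ v → ψ w ≠ ψ v) ∧
  (∀ s : Fin σ, ∀ v ∈ internals E s, ∀ w ∈ internals E s, v ≠ w → ψ v ≠ ψ w)

/-- Undirected adjacency induced by the charged edge sets. -/
def adjE {V : Type*} {σ : ℕ} (E : Fin σ → Set (V × V)) (v w : V) : Prop :=
  ∃ s, (v, w) ∈ E s ∨ (w, v) ∈ E s

/-- The underlying undirected graph is connected. -/
def IsConnectedGraph {V : Type*} {σ : ℕ} (E : Fin σ → Set (V × V)) : Prop :=
  ∀ v w : V, Relation.ReflTransGen (adjE E) v w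

/-- A Toom contour: a connected Toom graph with a designated root source `v₀`,
embedded so that the root has the strictly maximal time coordinate. -/
def IsToomContour {V : Type*} {σ d : ℕ} (E : Fin σ → Set (V × V)) (v₀ : V)
    (ψ : V → (Fin d → ℤ) × ℤ) : Prop :=
  IsToomGraph E ∧ IsConnectedGraph E ∧ v₀ ∈ sources E ∧ IsEmbedding E ψ ∧
  ∀ v : V, ψ v ≠ ψ v₀ → (ψ v).2 < (ψ v₀).2

/-- `E⃗∗_s`: directed edges of charge `s` starting at an internal vertex of
charge `s` or at the root. -/
def Estar {V : Type*} {σ : ℕ} (E : Fin σ → Set (V × V)) (v₀ : V) (s : Fin σ) :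
    Set (V × V) :=
  {e ∈ E s | e.1 ∈ internals E s ∨ e.1 = v₀}

/-- `E⃗∘_s`: directed edges of charge `s` starting at a source other than the
root. -/
def Ecirc {V : Type*} {σ : ℕ} (E : Fin σ → Set (V × V)) (v₀ : V) (s : Fin σ) :
    Set (V × V) :=
  {e ∈ E s | e.1 ∈ sources E ∧ e.1 ≠ v₀}

section AuxLemmas

open Finset in
lemma sum_proj_eq {α W : Type*} [Fintype W] (Es : Set α) (F : Finset α)
    (hF : ∀ e, e ∈ F ↔ e ∈ Es) (π : α → W) (g : W → ℝ) :
    ∑ e ∈ F, g (π e) = ∑ v : W, (({e ∈ Es | π e = v}).ncard : ℝ) * g v := by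
  classical
  rw [← Finset.sum_fiberwise_of_maps_to (g := π) (t := Finset.univ)
      (fun i _ => Finset.mem_univ _) (fun e => g (π e))]
  refine Finset.sum_congr rfl fun v _ => ?_
  have hset : {e ∈ Es | π e = v} = ↑(F.filter fun e => π e = v) := by
    ext e
    simp [hF e, Set.mem_setOf_eq]
  rw [hset, Set.ncard_coe_finset,
    Finset.sum_congr rfl (fun e he => by rw [(Finset.mem_filter.1 he).2]),
    Finset.sum_const, nsmul_eq_mul]

lemma minUp_nonempty {d : ℕ} {φ : Conf d → Bool} (hmono : IsMonotoneMap φ)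
    (hnc : ∃ x y : Conf d, φ x ≠ φ y) {A : Finset (Fin d → ℤ)} (hA : A ∈ minUp φ) :
    A.Nonempty := by
  rcases Finset.eq_empty_or_nonempty A with h | h
  · exfalso
    obtain ⟨x, y, hxy⟩ := hnc
    have hall : ∀ z : Conf d, φ z = true := by
      intro z
      have h1 : φ (ind A) = true := hA.1
      have h2 : φ (ind A) ≤ φ z := by
        apply hmono
        intro i
        simp [ind, h, Bool.false_le]
      rw [h1] at h2
      exact (le_antisymm h2 (Bool.le_true _)).symm
    exact hxy (by rw [hall x, hall y])
  · exact h

end AuxLemmas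
set_option maxHeartbeats 1000000 in
/-- Edge bound: for a Toom contour rooted at `(0,0)` whose edges satisfy the
increment rules given by the sets `A_s(φ)` and `B(φ)`, the number of edges of
each charge is at most `(1 + R/ε)(n_∗(T) - 1)`. -/
theorem stmt7 {V : Type*} [Finite V] {d σ : ℕ} (hσ : 2 ≤ σ)
    (φ : Conf d → Bool) (hloc : IsLocal φ) (hmono : IsMonotoneMap φ)
    (hnc : ∃ x y : Conf d, φ x ≠ φ y)
    (A : Fin σ → Finset (Fin d → ℤ)) (hA : ∀ s, A s ∈ minUp φ)
    (L : Fin σ → ((Fin d → ℝ) →ₗ[ℝ] ℝ))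
    (hpolar : ∀ z : Fin d → ℝ, ∑ s : Fin σ, L s z = 0)
    (B : Finset (Fin d → ℤ)) (hB : B = Finset.univ.biUnion A)
    (ε R : ℝ)
    (hε : ε = ∑ s : Fin σ, sInf ((fun i => L s (toR i)) '' (A s : Set (Fin d → ℤ))))
    (hR : R = ∑ s : Fin σ, -sInf ((fun i => L s (toR i)) '' (B : Set (Fin d → ℤ))))
    (hεpos : 0 < ε)
    (E : Fin σ → Set (V × V)) (v₀ : V) (ψ : V → (Fin d → ℤ) × ℤ)
    (hcont : IsToomContour E v₀ ψ) (hroot : ψ v₀ = (fun _ => 0, 0))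
    (hstar : ∀ s, ∀ e ∈ Estar E v₀ s, (ψ e.2).1 - (ψ e.1).1 ∈ A s)
    (hcirc : ∀ s, ∀ e ∈ Ecirc E v₀ s, (ψ e.2).1 - (ψ e.1).1 ∈ B) :
    ∀ s : Fin σ, ((E s).ncard : ℝ) ≤ (1 + R / ε) * (((sinks E).ncard : ℝ) - 1) := by

  classical
  obtain ⟨hTG, hconn, hsrcroot, hemb, hmax⟩ := hcont
  obtain ⟨htime, hsink_inj, hint_inj⟩ := hemb
  cases nonempty_fintype V
  intro s
  -- real-valued helper functions
  set fs : Fin σ → V → ℝ := fun l v => L l (toR (ψ v).1) with hfs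
  set tv : V → ℝ := fun v => ((ψ v).2 : ℝ) with htv
  set od : Fin σ → V → ℝ := fun l v => ((outE E l v).ncard : ℝ) with hod
  set idg : Fin σ → V → ℝ := fun l v => ((inE E l v).ncard : ℝ) with hidg
  -- Finset versions of edge sets
  have hEfin : ∀ l, (E l).Finite := fun l => Set.toFinite _
  set F : Fin σ → Finset (V × V) := fun l => (hEfin l).toFinset with hFdef
  have hFmem : ∀ l e, e ∈ F l ↔ e ∈ E l := fun l e => (hEfin l).mem_toFinset
  -- the basic vertex decomposition of edge sums
  have hdecomp : ∀ (l : Fin σ) (g : V → ℝ),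
      ∑ e ∈ F l, (g e.2 - g e.1) = ∑ v : V, (idg l v - od l v) * g v := by
    intro l g
    have h1 := sum_proj_eq (E l) (F l) (hFmem l) Prod.fst g
    have h2 := sum_proj_eq (E l) (F l) (hFmem l) Prod.snd g
    have ho : ∀ v, {e ∈ E l | Prod.fst e = v} = outE E l v := fun v => rfl
    have hi : ∀ v, {e ∈ E l | Prod.snd e = v} = inE E l v := fun v => rfl
    simp only [ho] at h1
    simp only [hi] at h2
    rw [Finset.sum_sub_distrib, h1, h2, ← Finset.sum_sub_distrib]
    exact Finset.sum_congr rfl fun v _ => by rw [hod, hidg]; ring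

  -- charge-independence of (out-degree - in-degree)
  have hdiff : ∀ (v : V) (l l' : Fin σ), od l v - idg l v = od l' v - idg l' v := by
    intro v l l'
    rcases hTG v with h | h | h | ⟨l₀, h1, h2, h3⟩
    · simp [hod, hidg, (h l).1, (h l).2, (h l').1, (h l').2]
    · simp [hod, hidg, (h l).1, (h l).2, (h l').1, (h l').2]
    · simp [hod, hidg, (h l).1, (h l).2, (h l').1, (h l').2]
    · have hval : ∀ m : Fin σ, od m v - idg m v = 0 := by
        intro m
        by_cases hm : m = l₀
        · subst hm; simp [hod, hidg, h1, h2]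
        · simp [hod, hidg, (h3 m hm).1, (h3 m hm).2]
      rw [hval l, hval l']
  -- the per-vertex polar cancellation
  have hpolarV : ∀ v : V, ∑ l : Fin σ, fs l v = 0 := fun v => hpolar _
  have hT0 : ∀ v : V, ∑ l : Fin σ, (idg l v - od l v) * fs l v = 0 := by
    intro v
    rcases hTG v with h | h | h | ⟨l₀, h1, h2, h3⟩
    · exact Finset.sum_eq_zero fun l _ => by simp [hod, hidg, (h l).1, (h l).2]
    · have hterm : ∀ l : Fin σ, (idg l v - od l v) * fs l v = -fs l v := by
        intro l; simp [hod, hidg, (h l).1, (h l).2]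
      rw [Finset.sum_congr rfl (fun l _ => hterm l), Finset.sum_neg_distrib, hpolarV v, neg_zero]
    · have hterm : ∀ l : Fin σ, (idg l v - od l v) * fs l v = fs l v := by
        intro l; simp [hod, hidg, (h l).1, (h l).2]
      rw [Finset.sum_congr rfl (fun l _ => hterm l), hpolarV v]
    · refine Finset.sum_eq_zero fun l _ => ?_
      by_cases hm : l = l₀
      · subst hm; simp [hod, hidg, h1, h2]
      · simp [hod, hidg, (h3 l hm).1, (h3 l hm).2]
  -- total sum over all charges vanishes
  have hT : ∑ l : Fin σ, ∑ e ∈ F l, (fs l e.2 - fs l e.1) = 0 := by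
    calc ∑ l : Fin σ, ∑ e ∈ F l, (fs l e.2 - fs l e.1)
        = ∑ l : Fin σ, ∑ v : V, (idg l v - od l v) * fs l v :=
          Finset.sum_congr rfl fun l _ => hdecomp l (fs l)
      _ = ∑ v : V, ∑ l : Fin σ, (idg l v - od l v) * fs l v := Finset.sum_comm
      _ = 0 := Finset.sum_eq_zero fun v _ => hT0 v
  -- the edge count of each charge, via time coordinates
  have hNcard : ∀ l : Fin σ, ((F l).card : ℝ) = ∑ v : V, (od l v - idg l v) * tv v := by
    intro l
    have h1 : ∀ e ∈ F l, tv e.1 - tv e.2 = (1:ℝ) := by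
      intro e he
      have ht := htime l e ((hFmem l e).1 he)
      simp only [htv]
      rw [ht]; push_cast; ring
    calc ((F l).card : ℝ) = ∑ _e ∈ F l, (1:ℝ) := by
          rw [Finset.sum_const, nsmul_eq_mul, mul_one]
      _ = ∑ e ∈ F l, (tv e.1 - tv e.2) := (Finset.sum_congr rfl h1).symm
      _ = -∑ e ∈ F l, (tv e.2 - tv e.1) := by
          rw [← Finset.sum_neg_distrib]; exact Finset.sum_congr rfl fun e _ => by ring
      _ = -∑ v : V, (idg l v - od l v) * tv v := by rw [hdecomp l tv]
      _ = ∑ v : V, (od l v - idg l v) * tv v := by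
          rw [← Finset.sum_neg_distrib]; exact Finset.sum_congr rfl fun v _ => by ring
  have hNeq : ∀ l l' : Fin σ, ((F l).card : ℝ) = ((F l').card : ℝ) := by
    intro l l'
    rw [hNcard l, hNcard l']
    exact Finset.sum_congr rfl fun v _ => by rw [hdiff v l l']

  -- the predicate singling out edges starting at a non-root source
  set p : V × V → Prop := fun e => e.1 ∈ sources E ∧ e.1 ≠ v₀ with hp
  have hsrc_od : ∀ v ∈ sources E, ∀ l l' : Fin σ, (outE E l v).ncard = (outE E l' v).ncard := by
    intro v hv l l'
    rcases hTG v with h | h | h | ⟨l₀, h1, h2, h3⟩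
    · rw [(h l).2, (h l').2]
    · rw [(h l).2, (h l').2]
    · exfalso; have hc := (h l).1; rw [hv l] at hc; simp at hc
    · exfalso; have hc := h1; rw [hv l₀] at hc; simp at hc
  -- fiberwise description of the number of edges starting at non-root sources
  have hfib : ∀ l : Fin σ, (((F l).filter p).card : ℝ)
      = ∑ v : V, (if v ∈ sources E ∧ v ≠ v₀ then ((outE E l v).ncard : ℝ) else 0) := by
    intro l
    have key : ((F l).filter p).card
        = ∑ v : V, (((F l).filter p).filter (fun e => e.1 = v)).card :=
      Finset.card_eq_sum_card_fiberwise (fun e _ => Finset.mem_univ _)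
    rw [key]
    push_cast
    refine Finset.sum_congr rfl fun v _ => ?_
    by_cases hv : v ∈ sources E ∧ v ≠ v₀
    · rw [if_pos hv]
      have hfil : ((F l).filter p).filter (fun e => e.1 = v)
          = (F l).filter (fun e => e.1 = v) := by
        ext e
        simp only [Finset.mem_filter, hp]
        constructor
        · rintro ⟨⟨he, _⟩, h2⟩; exact ⟨he, h2⟩
        · rintro ⟨he, h2⟩; exact ⟨⟨he, h2 ▸ hv⟩, h2⟩
      have hcard : ((F l).filter (fun e => e.1 = v)).card = (outE E l v).ncard := by
        rw [Set.ncard_eq_toFinset_card (outE E l v) (Set.toFinite _)]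
        congr 1
        ext e
        simp only [Finset.mem_filter, Set.Finite.mem_toFinset, hFmem l e]
        exact Iff.rfl
      rw [hfil, hcard]
    · rw [if_neg hv]
      have hfil : ((F l).filter p).filter (fun e => e.1 = v) = ∅ := by
        rw [Finset.filter_eq_empty_iff]
        intro e he h2
        exact hv (h2 ▸ (Finset.mem_filter.1 he).2)
      rw [hfil]
      simp
  have hFc_card : ∀ l l' : Fin σ, (((F l).filter p).card : ℝ) = (((F l').filter p).card : ℝ) := by
    intro l l'
    rw [hfib l, hfib l']
    refine Finset.sum_congr rfl fun v _ => ?_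
    by_cases hv : v ∈ sources E ∧ v ≠ v₀
    · rw [if_pos hv, if_pos hv, hsrc_od v hv.1 l l']
    · rw [if_neg hv, if_neg hv]

  -- the infima
  set εS : Fin σ → ℝ := fun l => sInf ((fun i => L l (toR i)) '' (A l : Set (Fin d → ℤ))) with hεS
  set βS : Fin σ → ℝ := fun l => sInf ((fun i => L l (toR i)) '' (B : Set (Fin d → ℤ))) with hβS
  have hεsum : ∑ l : Fin σ, εS l = ε := by rw [hε]
  have hRsum : ∑ l : Fin σ, βS l = -R := by
    rw [hR, Finset.sum_neg_distrib, neg_neg]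
  have hεS_le : ∀ (l : Fin σ) (i : Fin d → ℤ), i ∈ A l → εS l ≤ L l (toR i) := by
    intro l i hi
    exact csInf_le (((A l).finite_toSet.image _).bddBelow) ⟨i, Finset.mem_coe.2 hi, rfl⟩
  have hβS_le : ∀ (l : Fin σ) (i : Fin d → ℤ), i ∈ B → βS l ≤ L l (toR i) := by
    intro l i hi
    exact csInf_le ((B.finite_toSet.image _).bddBelow) ⟨i, Finset.mem_coe.2 hi, rfl⟩
  -- the value of an edge
  have hedge : ∀ (l : Fin σ) (e : V × V),
      fs l e.2 - fs l e.1 = L l (toR ((ψ e.2).1 - (ψ e.1).1)) := by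
    intro l e
    have hts : toR ((ψ e.2).1 - (ψ e.1).1) = toR (ψ e.2).1 - toR (ψ e.1).1 := by
      funext k; simp [toR]
    rw [hts, map_sub, hfs]
  -- bound the value of edges not starting at a non-root source
  have hstar' : ∀ l : Fin σ, ∀ e ∈ (F l).filter (fun e => ¬ p e), εS l ≤ fs l e.2 - fs l e.1 := by
    intro l e he
    rw [Finset.mem_filter] at he
    obtain ⟨heF, hnp⟩ := he
    have heE : e ∈ E l := (hFmem l e).1 heF
    have hout : e ∈ outE E l e.1 := ⟨heE, rfl⟩
    have hst : e.1 ∈ internals E l ∨ e.1 = v₀ := by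
      rcases hTG e.1 with h | h | h | ⟨l₀, h1, h2, h3⟩
      · exfalso; rw [(h l).2] at hout; exact Set.notMem_empty e hout
      · right
        by_contra hne
        exact hnp ⟨(fun m => (h m).1 : e.1 ∈ sources E), hne⟩
      · exfalso; rw [(h l).2] at hout; exact Set.notMem_empty e hout
      · left
        by_cases hm : l = l₀
        · subst hm; exact ⟨h1, h2⟩
        · exfalso; rw [((h3 l hm).2 : outE E l e.1 = ∅)] at hout
          exact Set.notMem_empty e hout
    have hmemA := hstar l e ⟨heE, hst⟩
    rw [hedge l e]
    exact hεS_le l _ hmemA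
  -- bound the value of edges starting at a non-root source
  have hcirc' : ∀ l : Fin σ, ∀ e ∈ (F l).filter p, βS l ≤ fs l e.2 - fs l e.1 := by
    intro l e he
    rw [Finset.mem_filter] at he
    have heE : e ∈ E l := (hFmem l e).1 he.1
    have hmemB := hcirc l e ⟨heE, he.2⟩
    rw [hedge l e]
    exact hβS_le l _ hmemB

  -- per-charge lower bound for the edge sums
  have hlow : ∀ l : Fin σ,
      (((F l).filter (fun e => ¬ p e)).card : ℝ) * εS l + (((F l).filter p).card : ℝ) * βS l
        ≤ ∑ e ∈ F l, (fs l e.2 - fs l e.1) := by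
    intro l
    rw [← Finset.sum_filter_add_sum_filter_not (F l) p (fun e => fs l e.2 - fs l e.1)]
    have h1 := Finset.card_nsmul_le_sum ((F l).filter p) _ (βS l) (hcirc' l)
    have h2 := Finset.card_nsmul_le_sum ((F l).filter (fun e => ¬ p e)) _ (εS l) (hstar' l)
    rw [nsmul_eq_mul] at h1 h2
    linarith
  -- the number of edges of charge `s`, and of circ edges, as reals
  set N : ℝ := ((F s).card : ℝ) with hN
  set m : ℝ := (((F s).filter p).card : ℝ) with hm
  have hmnonneg : 0 ≤ m := by rw [hm]; positivity
  have hfilters : ∀ l : Fin σ, (((F l).filter (fun e => ¬ p e)).card : ℝ) = N - m := by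
    intro l
    have hsum := Finset.card_filter_add_card_filter_not (s := F l) p
    have h3 : (((F l).filter p).card : ℝ) = m := by rw [hm]; exact hFc_card l s
    have h4 : ((F l).card : ℝ) = N := by rw [hN]; exact hNeq l s
    have h5 : (((F l).filter p).card : ℝ) + (((F l).filter (fun e => ¬ p e)).card : ℝ)
        = ((F l).card : ℝ) := by exact_mod_cast congrArg (Nat.cast : ℕ → ℝ) hsum
    linarith
  -- the key inequality
  have hkey : ε * (N - m) ≤ R * m := by
    have hle : ∑ l : Fin σ, ((N - m) * εS l + m * βS l) ≤ 0 := by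
      rw [← hT]
      refine Finset.sum_le_sum fun l _ => ?_
      have h1 := hlow l
      rw [hfilters l] at h1
      have h3 : (((F l).filter p).card : ℝ) = m := by rw [hm]; exact hFc_card l s
      rw [h3] at h1
      exact h1
    have hsplit : ∑ l : Fin σ, ((N - m) * εS l + m * βS l) = (N - m) * ε + m * (-R) := by
      rw [Finset.sum_add_distrib, ← Finset.mul_sum, ← Finset.mul_sum, hεsum, hRsum]
    rw [hsplit] at hle
    linarith
  -- R is nonnegative
  have hAne : ∀ l : Fin σ, (A l).Nonempty := fun l => minUp_nonempty hmono hnc (hA l)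
  obtain ⟨i₀, hi₀A⟩ := hAne s
  have hi₀B : i₀ ∈ B := by
    rw [hB]; exact Finset.mem_biUnion.2 ⟨s, Finset.mem_univ _, hi₀A⟩
  have hR0 : 0 ≤ R := by
    have h2 : ∑ l : Fin σ, βS l ≤ ∑ l : Fin σ, L l (toR i₀) :=
      Finset.sum_le_sum fun l _ => hβS_le l i₀ hi₀B
    rw [hRsum, hpolar (toR i₀)] at h2
    linarith
  -- the actual edge count equals N
  have hncard : ((E s).ncard : ℝ) = N := by
    rw [hN, Set.ncard_eq_toFinset_card (E s) (hEfin s)]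
  rw [hncard]

  have hdivpos : 0 ≤ 1 + R / ε := by
    have : 0 ≤ R / ε := div_nonneg hR0 hεpos.le
    linarith
  rcases hTG v₀ with hiso | hsrc2 | hsnk | ⟨l₀, h1, h2, h3⟩
  · -- root isolated: the graph is trivial
    have hEempty : ∀ l : Fin σ, E l = ∅ := by
      intro l
      ext e
      simp only [Set.mem_empty_iff_false, iff_false]
      intro he
      rcases Relation.ReflTransGen.cases_head (hconn v₀ e.1) with heq | ⟨c, hadj, _⟩
      · have hmem : e ∈ outE E l v₀ := ⟨he, heq.symm⟩
        rw [(hiso l).2] at hmem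
        exact Set.notMem_empty e hmem
      · obtain ⟨l', hl'⟩ := hadj
        rcases hl' with h | h
        · have hmem : ((v₀, c) : V × V) ∈ outE E l' v₀ := ⟨h, rfl⟩
          rw [(hiso l').2] at hmem
          exact Set.notMem_empty _ hmem
        · have hmem : ((c, v₀) : V × V) ∈ inE E l' v₀ := ⟨h, rfl⟩
          rw [(hiso l').1] at hmem
          exact Set.notMem_empty _ hmem
    have hFempty : F s = ∅ := by
      refine Finset.eq_empty_of_forall_notMem fun e he => ?_
      have := (hFmem s e).1 he
      rw [hEempty s] at this
      exact Set.notMem_empty e this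
    have hN0 : N = 0 := by rw [hN, hFempty]; simp
    have hv₀sink : v₀ ∈ sinks E := fun l => (hiso l).2
    have hsink1 : (1:ℝ) ≤ ((sinks E).ncard : ℝ) := by
      have : 0 < (sinks E).ncard := (Set.ncard_pos (Set.toFinite _)).2 ⟨v₀, hv₀sink⟩
      exact_mod_cast this
    have : 0 ≤ (1 + R / ε) * (((sinks E).ncard : ℝ) - 1) :=
      mul_nonneg hdivpos (by linarith)
    linarith
  · -- root is a (non-isolated) source: the main case
    set Src : Finset V :=
      Finset.univ.filter (fun v => ∀ l : Fin σ, inE E l v = ∅ ∧ (outE E l v).ncard = 1)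
      with hSrcdef
    set Snk : Finset V :=
      Finset.univ.filter (fun v => ∀ l : Fin σ, (inE E l v).ncard = 1 ∧ outE E l v = ∅)
      with hSnkdef
    have hncard_ne : ∀ (S : Set (V × V)), S = ∅ → S.ncard = 1 → False := by
      intro S hS h1; rw [hS] at h1; simp at h1
    have hv₀Src : v₀ ∈ Src := Finset.mem_filter.2 ⟨Finset.mem_univ _, hsrc2⟩
    -- m equals the number of non-root sources
    have hm_eq : m = (Src.card : ℝ) - 1 := by
      have hterm : ∀ v : V,
          (if v ∈ sources E ∧ v ≠ v₀ then ((outE E s v).ncard : ℝ) else 0)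
            = (if v ∈ Src.erase v₀ then (1:ℝ) else 0) := by
        intro v
        by_cases hv : v ∈ sources E ∧ v ≠ v₀
        · rw [if_pos hv]
          rcases hTG v with h | h | h | ⟨l₀, h1, h2, h3⟩
          · have hnot : v ∉ Src.erase v₀ := by
              intro hmem
              have hS := Finset.mem_filter.1 (Finset.mem_of_mem_erase hmem)
              exact hncard_ne _ (h s).2 (hS.2 s).2
            rw [if_neg hnot, (h s).2]
            simp
          · have hmem : v ∈ Src.erase v₀ :=
              Finset.mem_erase.2 ⟨hv.2, Finset.mem_filter.2 ⟨Finset.mem_univ _, h⟩⟩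
            rw [if_pos hmem, (h s).2]
            simp
          · exfalso
            have hc := (h s).1
            rw [hv.1 s] at hc
            simp at hc
          · exfalso
            have hc := h1
            rw [hv.1 l₀] at hc
            simp at hc
        · rw [if_neg hv]
          have hnot : v ∉ Src.erase v₀ := by
            intro hmem
            obtain ⟨hne, hS⟩ := Finset.mem_erase.1 hmem
            have hS' := (Finset.mem_filter.1 hS).2
            exact hv ⟨fun l => (hS' l).1, hne⟩
          rw [if_neg hnot]
      have h1 : m = ∑ v : V, (if v ∈ Src.erase v₀ then (1:ℝ) else 0) := by
        rw [hm, hfib s]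
        exact Finset.sum_congr rfl fun v _ => hterm v
      rw [h1, Finset.sum_ite_mem, Finset.univ_inter, Finset.sum_const, nsmul_eq_mul, mul_one,
        Finset.card_erase_of_mem hv₀Src]
      have hpos : 1 ≤ Src.card := Finset.card_pos.2 ⟨v₀, hv₀Src⟩
      push_cast [Nat.cast_sub hpos]
      ring
    -- the number of sources equals the number of sinks
    have hsrcsnk : (Src.card : ℝ) = (Snk.card : ℝ) := by
      have hzero : ∑ v : V, (idg s v - od s v) = 0 := by
        have hd := hdecomp s (fun _ => (1:ℝ))
        simp only [mul_one, sub_self] at hd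
        rw [← hd, Finset.sum_const, smul_zero]
      have hterm : ∀ v : V, idg s v - od s v
          = (if v ∈ Snk then (1:ℝ) else 0) - (if v ∈ Src then (1:ℝ) else 0) := by
        intro v
        rcases hTG v with h | h | h | ⟨l₀, h1, h2, h3⟩
        · have hnS : v ∉ Src := fun hmem =>
            hncard_ne _ (h s).2 (((Finset.mem_filter.1 hmem).2 s).2)
          have hnK : v ∉ Snk := fun hmem =>
            hncard_ne _ (h s).1 (((Finset.mem_filter.1 hmem).2 s).1)
          rw [if_neg hnS, if_neg hnK]
          simp [hod, hidg, (h s).1, (h s).2]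
        · have hS : v ∈ Src := Finset.mem_filter.2 ⟨Finset.mem_univ _, h⟩
          have hnK : v ∉ Snk := fun hmem =>
            hncard_ne _ (h s).1 (((Finset.mem_filter.1 hmem).2 s).1)
          rw [if_pos hS, if_neg hnK]
          simp [hod, hidg, (h s).1, (h s).2]
        · have hK : v ∈ Snk := Finset.mem_filter.2 ⟨Finset.mem_univ _, h⟩
          have hnS : v ∉ Src := fun hmem =>
            hncard_ne _ (h s).2 (((Finset.mem_filter.1 hmem).2 s).2)
          rw [if_neg hnS, if_pos hK]
          simp [hod, hidg, (h s).1, (h s).2]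
        · have hnS : v ∉ Src := fun hmem =>
            hncard_ne _ (((Finset.mem_filter.1 hmem).2 l₀).1) h1
          have hnK : v ∉ Snk := fun hmem =>
            hncard_ne _ (((Finset.mem_filter.1 hmem).2 l₀).2) h2
          rw [if_neg hnS, if_neg hnK]
          by_cases hls : s = l₀
          · subst hls; simp [hod, hidg, h1, h2]
          · simp [hod, hidg, (h3 s hls).1, (h3 s hls).2]
      have h2 : ∑ v : V, ((if v ∈ Snk then (1:ℝ) else 0) - (if v ∈ Src then (1:ℝ) else 0)) = 0 :=
        Eq.trans (Finset.sum_congr rfl fun v _ => (hterm v).symm) hzero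
      rw [Finset.sum_sub_distrib, Finset.sum_ite_mem, Finset.sum_ite_mem, Finset.univ_inter,
        Finset.univ_inter, Finset.sum_const, Finset.sum_const, nsmul_eq_mul, nsmul_eq_mul,
        mul_one, mul_one] at h2
      linarith
    -- sinks of the Toom graph are sinks of the contour
    have hSnk_le : (Snk.card : ℝ) ≤ ((sinks E).ncard : ℝ) := by
      rw [Set.ncard_eq_toFinset_card (sinks E) (Set.toFinite _)]
      have hsub : Snk ⊆ (Set.toFinite (sinks E)).toFinset := by
        intro v hv
        rw [Set.Finite.mem_toFinset]
        exact fun l => ((Finset.mem_filter.1 hv).2 l).2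
      exact_mod_cast Finset.card_le_card hsub
    -- wrap up the arithmetic
    have hm_le : m ≤ ((sinks E).ncard : ℝ) - 1 := by
      rw [hm_eq]; linarith
    have h9 : ε * N ≤ (ε + R) * m := by nlinarith [hkey]
    have h10 : (ε + R) * m ≤ (ε + R) * (((sinks E).ncard : ℝ) - 1) :=
      mul_le_mul_of_nonneg_left hm_le (by linarith)
    have h11 : ε * ((1 + R / ε) * (((sinks E).ncard : ℝ) - 1))
        = (ε + R) * (((sinks E).ncard : ℝ) - 1) := by
      have hεne : ε ≠ 0 := ne_of_gt hεpos
      field_simp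
    have h12 : ε * N ≤ ε * ((1 + R / ε) * (((sinks E).ncard : ℝ) - 1)) := by
      rw [h11]; linarith
    exact le_of_mul_le_mul_left h12 hεpos
  · -- root cannot be a sink
    exfalso
    have hc := (hsnk s).1
    rw [hsrcroot s] at hc
    simp at hc
  · -- root cannot be internal
    exfalso
    have hc := h1
    rw [hsrcroot l₀] at hc
    simp at hc
end

section
/- (Erosion criterion implies eroder — edge speed bound.) Let φ be a non-constant monotone local map on {0,1}^{Z^d}, let L be a polar function of dimension σ, and for 1 ≤ s ≤ σ define δ_s := sup_{A ∈ 𝒜(φ)} inf_{i ∈ A} L_s(i) and, for a configuration x, r_s(x) := sup{L_s(i) : i ∈ Z^d, x(i) = 0} (with r_s of the all-one configuration := −∞). Let (X_n)_{n≥0} be the deterministic cellular automaton X_{n+1}(i) = φ(θ_i X_n). Then r_s(X_n) ≤ r_s(X_0) − δ_s n for all n ≥ 0 and 1 ≤ s ≤ σ. -/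
/-- `r_L(x) := sup{L(i) : i ∈ ℤ^d, x(i) = 0}` as an extended real (`⊥ = -∞` if
`x` has no zeros). -/
noncomputable def edgeSup {d : ℕ} (L : (Fin d → ℝ) →ₗ[ℝ] ℝ) (x : Conf d) : EReal :=
  sSup ((fun i => ((L (toR i) : ℝ) : EReal)) '' {i | x i = false})

/-- `δ_L(φ) := sup_{A ∈ 𝒜(φ)} inf_{i ∈ A} L(i)`. -/
noncomputable def speed {d : ℕ} (φ : Conf d → Bool) (L : (Fin d → ℝ) →ₗ[ℝ] ℝ) : ℝ :=
  sSup {r : ℝ | ∃ A ∈ minUp φ, r = sInf ((fun i => L (toR i)) '' (A : Set (Fin d → ℤ)))}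

/-! If `X_{n+1}(i) = 0`, then for every `A ∈ 𝒜(φ)` some `i + j` with `j ∈ A` is a zero of `X_n`,
since otherwise `θ_i X_n ≥ 1_A` and monotonicity would give `X_{n+1}(i) = 1`. Hence
`L(i) + inf_{j ∈ A} L(j) ≤ r_L(X_n)` for every `A`, i.e. `L(i) + δ_L ≤ r_L(X_n)`, and the bound
follows by induction on `n`. Locality is what makes `𝒜(φ)` nonempty, so that `δ_L` is a genuine
supremum rather than the junk value `sSup ∅ = 0`. -/

section
variable {d : ℕ}

lemma toR_add (i j : Fin d → ℤ) : toR (i + j) = toR i + toR j := by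
  funext k
  simp [toR]

lemma exists_mem_minUp_subset {φ : Conf d → Bool} {A : Finset (Fin d → ℤ)}
    (hA : φ (ind A) = true) : ∃ B ∈ minUp φ, B ⊆ A := by
  obtain ⟨B, hBA, hB, hmin⟩ :=
    exists_minimal_le_of_wellFoundedLT (fun B => φ (ind B) = true) A hA
  exact ⟨B, ⟨hB, fun C hCB hC => le_antisymm hCB (hmin hC hCB)⟩, hBA⟩

lemma IsMonotoneMap.apply_const_true {φ : Conf d → Bool} (hmono : IsMonotoneMap φ)
    (hnc : ∃ x y : Conf d, φ x ≠ φ y) : φ (fun _ => true) = true := by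
  obtain ⟨x, y, hxy⟩ := hnc
  by_contra h
  rw [Bool.not_eq_true] at h
  have hfalse (z : Conf d) : φ z = false := by
    have hz := hmono z (fun _ => true) fun _ => Bool.le_true _
    rw [h] at hz
    revert hz
    cases φ z <;> decide
  exact hxy ((hfalse x).trans (hfalse y).symm)

lemma IsLocal.minUp_nonempty {φ : Conf d → Bool} (hloc : IsLocal φ)
    (hone : φ (fun _ => true) = true) : (minUp φ).Nonempty := by
  obtain ⟨Δ, hΔ⟩ := hloc
  have hΔ_true : φ (ind Δ) = true := (hΔ _ _ fun i hi => by simp [ind, hi]).trans hone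
  obtain ⟨A, hA, -⟩ := exists_mem_minUp_subset hΔ_true
  exact ⟨A, hA⟩

lemma IsMonotoneMap.exists_mem_eq_false {φ : Conf d → Bool} (hmono : IsMonotoneMap φ)
    {A : Finset (Fin d → ℤ)} (hA : φ (ind A) = true) {x : Conf d} (hx : φ x = false) :
    ∃ j ∈ A, x j = false := by
  by_contra! h
  have hle : φ (ind A) ≤ φ x := hmono _ _ fun j => by
    by_cases hj : j ∈ A
    · simp [ind, hj, h j hj]
    · simp [ind, hj]
  rw [hA, hx] at hle
  exact absurd hle (by decide)

variable (L : (Fin d → ℝ) →ₗ[ℝ] ℝ)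

lemma le_edgeSup {x : Conf d} {i : Fin d → ℤ} (hi : x i = false) :
    ((L (toR i) : ℝ) : EReal) ≤ edgeSup L x :=
  le_sSup ⟨i, hi, rfl⟩

lemma speed_le {φ : Conf d → Bool} (hne : (minUp φ).Nonempty) {b : ℝ}
    (h : ∀ A ∈ minUp φ, ∃ j ∈ A, L (toR j) ≤ b) : speed φ L ≤ b := by
  obtain ⟨A₀, hA₀⟩ := hne
  refine csSup_le ⟨_, A₀, hA₀, rfl⟩ ?_
  rintro _ ⟨A, hA, rfl⟩
  obtain ⟨j, hjA, hj⟩ := h A hA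
  exact (csInf_le (A.finite_toSet.image _).bddBelow ⟨j, hjA, rfl⟩).trans hj

lemma coe_add_speed_le_edgeSup {φ : Conf d → Bool} (hne : (minUp φ).Nonempty) {x : Conf d}
    {i : Fin d → ℤ} (h : ∀ A ∈ minUp φ, ∃ j ∈ A, x (i + j) = false) :
    ((L (toR i) + speed φ L : ℝ) : EReal) ≤ edgeSup L x := by
  cases hx : edgeSup L x using EReal.rec with
  | bot =>
    obtain ⟨j, -, hj⟩ := h _ hne.some_mem
    simpa [hx] using le_edgeSup L hj
  | top => exact le_top
  | coe c =>
    have hspeed : speed φ L ≤ c - L (toR i) := speed_le L hne fun A hA => by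
      obtain ⟨j, hjA, hj⟩ := h A hA
      have hij := le_edgeSup L hj
      rw [hx, toR_add, map_add, EReal.coe_le_coe_iff] at hij
      exact ⟨j, hjA, by linarith⟩
    exact EReal.coe_le_coe_iff.mpr (by linarith)

lemma edgeSup_le_add_neg_speed {φ : Conf d → Bool} (hmono : IsMonotoneMap φ)
    (hne : (minUp φ).Nonempty) {x y : Conf d} (hy : ∀ i, y i = φ (shift i x)) :
    edgeSup L y ≤ edgeSup L x + ((-speed φ L : ℝ) : EReal) := by
  refine sSup_le ?_
  rintro _ ⟨i, hi, rfl⟩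
  have hsum := coe_add_speed_le_edgeSup L hne fun A hA =>
    hmono.exists_mem_eq_false hA.1 ((hy i).symm.trans hi)
  rwa [EReal.coe_neg, ← sub_eq_add_neg, EReal.le_sub_iff_add_le (by simp) (by simp),
    ← EReal.coe_add]

end

lemma le_add_neg_mul_of_forall_succ_le {u : ℕ → EReal} {c : ℝ}
    (h : ∀ n, u (n + 1) ≤ u n + ((-c : ℝ) : EReal)) (n : ℕ) :
    u n ≤ u 0 + ((-(n * c) : ℝ) : EReal) := by
  induction n with
  | zero => simp
  | succ n ih =>
    calc u (n + 1) ≤ u n + ((-c : ℝ) : EReal) := h n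
      _ ≤ u 0 + ((-(n * c) : ℝ) : EReal) + ((-c : ℝ) : EReal) := add_le_add_left ih _
      _ = u 0 + ((-((n + 1 : ℕ) * c) : ℝ) : EReal) := by
        rw [add_assoc, ← EReal.coe_add]
        congr 2
        push_cast
        ring

theorem stmt8_general {d σ : ℕ} (φ : Conf d → Bool)
    (hloc : IsLocal φ) (hmono : IsMonotoneMap φ) (hnc : ∃ x y : Conf d, φ x ≠ φ y)
    (L : Fin σ → ((Fin d → ℝ) →ₗ[ℝ] ℝ))
    (X : ℕ → Conf d) (hX : ∀ n i, X (n + 1) i = φ (shift i (X n))) :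
    ∀ (n : ℕ) (s : Fin σ),
      edgeSup (L s) (X n) ≤ edgeSup (L s) (X 0) + ((-((n : ℝ) * speed φ (L s)) : ℝ) : EReal) := by
  intro n s
  have hne : (minUp φ).Nonempty := hloc.minUp_nonempty (hmono.apply_const_true hnc)
  exact le_add_neg_mul_of_forall_succ_le (u := fun n => edgeSup (L s) (X n))
    (fun n => edgeSup_le_add_neg_speed (L s) hmono hne (hX n)) n

/-- Edge speed bound: for the deterministic cellular automaton with rule `φ`,
`r_s(X_n) ≤ r_s(X_0) - δ_s n` for every coordinate `L_s` of a polar function. -/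
theorem stmt8 {d σ : ℕ} (hσ : 2 ≤ σ) (φ : Conf d → Bool)
    (hloc : IsLocal φ) (hmono : IsMonotoneMap φ) (hnc : ∃ x y : Conf d, φ x ≠ φ y)
    (L : Fin σ → ((Fin d → ℝ) →ₗ[ℝ] ℝ))
    (hpolar : ∀ z : Fin d → ℝ, ∑ s : Fin σ, L s z = 0)
    (X : ℕ → Conf d) (hX : ∀ n i, X (n + 1) i = φ (shift i (X n))) :
    ∀ (n : ℕ) (s : Fin σ),
      edgeSup (L s) (X n) ≤ edgeSup (L s) (X 0) + ((-((n : ℝ) * speed φ (L s)) : ℝ) : EReal) :=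
  stmt8_general φ hloc hmono hnc L X hX
end

section
/- (Exponential bound on the number of rooted Toom contours, two charges.) Let φ be a non-constant monotone local map, fix A_1(φ), A_2(φ) ∈ 𝒜(φ) with cardinalities M_1, M_2, and let 𝒯''_0 denote the set of equivalence classes of Toom contours with 2 charges rooted at (0,0) satisfying: edges of charge s starting at internal vertices or the root have spatial increment in A_s(φ); edges of charge s starting at a source other than the root have spatial increment in A_{3−s}(φ); and at every source other than the root, the two outgoing edges have distinct spatial endpoints. Let N''_n be the number of such contours with exactly n edges of each charge. Then N''_n ≤ (1/2)(4 M_1 M_2)^n for all n ≥ 1. -/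
/-- A space-time point. -/
abbrev Pt (d : ℕ) := (Fin d → ℤ) × ℤ

/-- `N''_n`: the number of equivalence classes of Toom contours with two charges
rooted at `(0,0)` with `n` edges of each charge, in which edges of charge `s`
out of internal vertices or the root have spatial increment in `A s`, edges of
charge `s` out of other sources have spatial increment in `A (s+1)` (the other
charge), and the two edges out of any source other than the root have distinct
spatial endpoints.  Equivalence classes are identified with the invariant data
(sink images, images of the edge sets `E⃗∗_s` and `E⃗∘_s`). -/
noncomputable def Ncount'' (d n : ℕ) (A : Fin 2 → Finset (Fin d → ℤ)) : ℕ :=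
  Set.ncard { data : Set (Pt d) × (Fin 2 → Set (Pt d × Pt d)) × (Fin 2 → Set (Pt d × Pt d)) |
    ∃ (V : Type) (_ : Finite V) (E : Fin 2 → Set (V × V)) (v₀ : V) (ψ : V → Pt d),
      IsToomContour E v₀ ψ ∧ ψ v₀ = (fun _ => 0, 0) ∧
      (∀ s, ∀ e ∈ Estar E v₀ s, (ψ e.2).1 - (ψ e.1).1 ∈ A s) ∧
      (∀ s, ∀ e ∈ Ecirc E v₀ s, (ψ e.2).1 - (ψ e.1).1 ∈ A (s + 1)) ∧
      (∀ v ∈ sources E, v ≠ v₀ → ∀ w₁ w₂ : V,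
        (v, w₁) ∈ E 0 → (v, w₂) ∈ E 1 → (ψ w₁).1 ≠ (ψ w₂).1) ∧
      (∀ s, (E s).ncard = n) ∧
      data.1 = ψ '' sinks E ∧
      data.2.1 = (fun s => (fun e : V × V => (ψ e.1, ψ e.2)) '' Estar E v₀ s) ∧
      data.2.2 = (fun s => (fun e : V × V => (ψ e.1, ψ e.2)) '' Ecirc E v₀ s) }

/-!
Reverse the edges of charge `1`. In a Toom graph with two charges every non-isolated vertex is
then left by exactly one edge and entered by exactly one, so "take the edge leaving the head"
permutes the edges, and connectedness makes this permutation a single cycle of length `2n`.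
Read from the root, the cycle records a contour by its `2n` charges (the first one is `0`) and
its `2n` spatial increments: whether a vertex is a source, a sink or internal, and hence from
which of `A 0`, `A 1` each increment is drawn, is read off the charges of consecutive edges.
The cycle enters a non-root source along its reversed edge of charge `1` and leaves it along its
edge of charge `0`; pairing these two edges shows that exactly `n` increments come from `A 0`
and `n` from `A 1`. Hence there are at most `2 ^ (2n - 1) * M₁ ^ n * M₂ ^ n` classes.
-/

open Function

section ToomGraph

variable {V : Type*} {E : Fin 2 → Set (V × V)}

theorem Set.subsingleton_of_eq_empty_or_ncard_eq_one {α : Type*} {S : Set α}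
    (h : S = ∅ ∨ S.ncard = 1) : S.Subsingleton := by
  rcases h with rfl | h
  · exact Set.subsingleton_empty
  · obtain ⟨a, rfl⟩ := Set.ncard_eq_one.mp h
    exact Set.subsingleton_singleton

theorem IsToomGraph.inE_eq_empty_or_ncard_eq_one (htg : IsToomGraph E) (s : Fin 2) (u : V) :
    inE E s u = ∅ ∨ (inE E s u).ncard = 1 := by
  rcases htg u with h | h | h | ⟨l, hl, -, hne⟩
  · exact .inl (h s).1
  · exact .inl (h s).1
  · exact .inr (h s).1
  · by_cases hs : s = l
    · exact .inr (hs ▸ hl)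
    · exact .inl (hne s hs).1

theorem IsToomGraph.outE_eq_empty_or_ncard_eq_one (htg : IsToomGraph E) (s : Fin 2) (u : V) :
    outE E s u = ∅ ∨ (outE E s u).ncard = 1 := by
  rcases htg u with h | h | h | ⟨l, -, hl, hne⟩
  · exact .inl (h s).2
  · exact .inr (h s).2
  · exact .inl (h s).2
  · by_cases hs : s = l
    · exact .inr (hs ▸ hl)
    · exact .inl (hne s hs).2

theorem IsToomGraph.inE_subsingleton (htg : IsToomGraph E) (s : Fin 2) (u : V) :
    (inE E s u).Subsingleton :=
  Set.subsingleton_of_eq_empty_or_ncard_eq_one (htg.inE_eq_empty_or_ncard_eq_one s u)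

theorem IsToomGraph.outE_subsingleton (htg : IsToomGraph E) (s : Fin 2) (u : V) :
    (outE E s u).Subsingleton :=
  Set.subsingleton_of_eq_empty_or_ncard_eq_one (htg.outE_eq_empty_or_ncard_eq_one s u)

theorem IsToomGraph.degree_pattern (htg : IsToomGraph E) (u : V) :
    let i s := (inE E s u).Nonempty
    let o s := (outE E s u).Nonempty
    (¬i 0 ∧ ¬i 1 ∧ (o 0 ↔ o 1)) ∨ (i 0 ∧ i 1 ∧ ¬o 0 ∧ ¬o 1) ∨
      (i 0 ∧ o 0 ∧ ¬i 1 ∧ ¬o 1) ∨ (¬i 0 ∧ ¬o 0 ∧ i 1 ∧ o 1) := by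
  have nonempty {S : Set (V × V)} (h : S.ncard = 1) : S.Nonempty :=
    Set.nonempty_of_ncard_ne_zero (by omega)
  rcases htg u with h | h | h | ⟨l, hi, ho, hne⟩
  · simp [(h 0).1, (h 0).2, (h 1).1, (h 1).2]
  · simp [(h 0).1, (h 1).1, nonempty (h 0).2, nonempty (h 1).2]
  · simp [(h 0).2, (h 1).2, nonempty (h 0).1, nonempty (h 1).1]
  · obtain rfl | rfl : l = 0 ∨ l = 1 := by omega
    · simp [(hne 1 (by decide)).1, (hne 1 (by decide)).2, nonempty hi, nonempty ho]
    · simp [(hne 0 (by decide)).1, (hne 0 (by decide)).2, nonempty hi, nonempty ho]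

theorem IsToomGraph.not_outE_zero_and_inE_one (htg : IsToomGraph E) (u : V) :
    ¬((outE E 0 u).Nonempty ∧ (inE E 1 u).Nonempty) := by
  have := htg.degree_pattern u; tauto

theorem IsToomGraph.not_inE_zero_and_outE_one (htg : IsToomGraph E) (u : V) :
    ¬((inE E 0 u).Nonempty ∧ (outE E 1 u).Nonempty) := by
  have := htg.degree_pattern u; tauto

theorem IsToomGraph.outE_zero_or_inE_one_of_inE_zero (htg : IsToomGraph E) {u : V}
    (h : (inE E 0 u).Nonempty) : (outE E 0 u).Nonempty ∨ (inE E 1 u).Nonempty := by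
  have := htg.degree_pattern u; tauto

theorem IsToomGraph.outE_zero_or_inE_one_of_outE_one (htg : IsToomGraph E) {u : V}
    (h : (outE E 1 u).Nonempty) : (outE E 0 u).Nonempty ∨ (inE E 1 u).Nonempty := by
  have := htg.degree_pattern u; tauto

theorem notMem_sources_of_inE_nonempty {s : Fin 2} {u : V} (h : (inE E s u).Nonempty) :
    u ∉ sources E :=
  fun hu => h.ne_empty (hu s)

theorem notMem_sinks_of_outE_nonempty {s : Fin 2} {u : V} (h : (outE E s u).Nonempty) :
    u ∉ sinks E :=
  fun hu => h.ne_empty (hu s)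

theorem IsToomGraph.mem_sources_of_outE_nonempty (htg : IsToomGraph E) {u : V}
    (h0 : (outE E 0 u).Nonempty) (h1 : (outE E 1 u).Nonempty) : u ∈ sources E := by
  have := htg.degree_pattern u
  simp only [sources, Set.mem_ofPred_eq, Fin.forall_fin_two, ← Set.not_nonempty_iff_eq_empty]
  tauto

theorem IsToomGraph.mem_sinks_of_inE_nonempty (htg : IsToomGraph E) {u : V}
    (h0 : (inE E 0 u).Nonempty) (h1 : (inE E 1 u).Nonempty) : u ∈ sinks E := by
  have := htg.degree_pattern u
  simp only [sinks, Set.mem_ofPred_eq, Fin.forall_fin_two, ← Set.not_nonempty_iff_eq_empty]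
  tauto

theorem IsToomGraph.mem_internals_iff (htg : IsToomGraph E) {s : Fin 2} {e : V × V}
    (he : e ∈ E s) : e.1 ∈ internals E s ↔ e.1 ∉ sources E := by
  have ncard_eq_one {S : Set (V × V)} (h : S = ∅ ∨ S.ncard = 1) : S.ncard = 1 ↔ S.Nonempty :=
    ⟨fun h1 => Set.nonempty_of_ncard_ne_zero (by omega), fun h1 => h.resolve_left h1.ne_empty⟩
  have ho : (outE E s e.1).Nonempty := ⟨e, he, rfl⟩
  have h01 := htg.not_outE_zero_and_inE_one e.1
  have h10 := htg.not_inE_zero_and_outE_one e.1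
  simp only [internals, sources, Set.mem_ofPred_eq,
    ncard_eq_one (htg.inE_eq_empty_or_ncard_eq_one _ _),
    ncard_eq_one (htg.outE_eq_empty_or_ncard_eq_one _ _), Fin.forall_fin_two,
    ← Set.not_nonempty_iff_eq_empty]
  obtain rfl | rfl : s = 0 ∨ s = 1 := by omega
  all_goals tauto

theorem IsToomGraph.mem_Estar_iff (htg : IsToomGraph E) {v₀ : V} {s : Fin 2} {e : V × V}
    (he : e ∈ E s) : e ∈ Estar E v₀ s ↔ e ∉ Ecirc E v₀ s := by
  simp only [Estar, Ecirc, Set.mem_ofPred_eq, htg.mem_internals_iff he]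
  tauto

end ToomGraph

theorem Equiv.Perm.exists_bijective_orbit {α : Type*} [Finite α] {σ : Equiv.Perm α} {x : α}
    (hx : ∀ y, σ.SameCycle x y) {m : ℕ} [NeZero m] (hm : Nat.card α = m) :
    ∃ w : Fin m → α, Bijective w ∧ w 0 = x ∧ ∀ j, w (j + 1) = σ (w j) := by
  set p := minimalPeriod σ x
  have hp : 0 < p := minimalPeriod_pos_of_mem_periodicPts (σ.injective.mem_periodicPts x)
  have hcover (y : α) : ∃ k < p, σ^[k] x = y := by
    obtain ⟨i, hi⟩ := (hx y).exists_nat_pow_eq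
    exact ⟨i % p, Nat.mod_lt _ hp, by rw [iterate_mod_minimalPeriod_eq, ← hi, Equiv.Perm.coe_pow]⟩
  have hpm : p = m := by
    rw [← hm, ← Nat.card_fin p]
    refine Nat.card_eq_of_bijective (fun k : Fin p => σ^[k] x) ⟨?_, ?_⟩
    · exact fun i j hij => Fin.ext (iterate_injOn_Iio_minimalPeriod i.2 j.2 hij)
    · intro y
      obtain ⟨k, hk, rfl⟩ := hcover y
      exact ⟨⟨k, hk⟩, rfl⟩
  refine ⟨fun j => σ^[j] x, ⟨?_, ?_⟩, rfl, fun j => ?_⟩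
  · exact fun i j hij => Fin.ext (iterate_injOn_Iio_minimalPeriod (hpm ▸ i.2) (hpm ▸ j.2) hij)
  · intro y
    obtain ⟨k, hk, rfl⟩ := hcover y
    exact ⟨⟨k, hpm ▸ hk⟩, rfl⟩
  · simp only [Fin.val_add, Fin.val_one', Nat.add_mod_mod, ← hpm]
    exact iterate_mod_minimalPeriod_eq.trans (iterate_succ_apply' _ _ _)

namespace Toom

variable {V : Type*} {E : Fin 2 → Set (V × V)}

/-- The edges of a two-charge graph, those of charge `1` being traversed backwards. -/
abbrev Dart (E : Fin 2 → Set (V × V)) := Σ s : Fin 2, E s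

namespace Dart

def edge (g : Dart E) : V × V := g.2

theorem edge_mem (g : Dart E) : g.edge ∈ E g.1 := g.2.2

def tail (g : Dart E) : V := if g.1 = 0 then g.edge.1 else g.edge.2

def head (g : Dart E) : V := if g.1 = 0 then g.edge.2 else g.edge.1

theorem edge_eq (g : Dart E) :
    g.edge = if g.1 = 0 then (g.tail, g.head) else (g.head, g.tail) := by
  unfold tail head; split_ifs <;> rfl

theorem ext_of_edge : ∀ {g g' : Dart E}, g.1 = g'.1 → g.edge = g'.edge → g = g'
  | ⟨_, _, _⟩, ⟨_, _, _⟩, rfl, rfl => rfl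

theorem tail_spec (g : Dart E) :
    (g.1 = 0 ∧ g.edge ∈ outE E 0 g.tail) ∨ (g.1 = 1 ∧ g.edge ∈ inE E 1 g.tail) := by
  obtain ⟨s, e, he⟩ := g
  obtain rfl | rfl : s = 0 ∨ s = 1 := by omega
  · exact .inl ⟨rfl, he, rfl⟩
  · exact .inr ⟨rfl, he, rfl⟩

theorem head_spec (g : Dart E) :
    (g.1 = 0 ∧ g.edge ∈ inE E 0 g.head) ∨ (g.1 = 1 ∧ g.edge ∈ outE E 1 g.head) := by
  obtain ⟨s, e, he⟩ := g
  obtain rfl | rfl : s = 0 ∨ s = 1 := by omega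
  · exact .inl ⟨rfl, he, rfl⟩
  · exact .inr ⟨rfl, he, rfl⟩

theorem tail_eq_fst_or_head_eq_fst (g : Dart E) : g.tail = g.edge.1 ∨ g.head = g.edge.1 := by
  rw [edge_eq]; split_ifs <;> simp

theorem tail_eq_snd_or_head_eq_snd (g : Dart E) : g.tail = g.edge.2 ∨ g.head = g.edge.2 := by
  rw [edge_eq]; split_ifs <;> simp

end Dart

open Dart

theorem _root_.IsToomGraph.tail_injective (htg : IsToomGraph E) : Injective (tail (E := E)) := by
  intro g g' h
  rcases g.tail_spec with ⟨hg, hge⟩ | ⟨hg, hge⟩ <;>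
    rcases g'.tail_spec with ⟨hg', hge'⟩ | ⟨hg', hge'⟩ <;> rw [← h] at hge'
  · exact ext_of_edge (hg.trans hg'.symm) (htg.outE_subsingleton 0 _ hge hge')
  · exact (htg.not_outE_zero_and_inE_one _ ⟨⟨_, hge⟩, ⟨_, hge'⟩⟩).elim
  · exact (htg.not_outE_zero_and_inE_one _ ⟨⟨_, hge'⟩, ⟨_, hge⟩⟩).elim
  · exact ext_of_edge (hg.trans hg'.symm) (htg.inE_subsingleton 1 _ hge hge')

theorem _root_.IsToomGraph.head_injective (htg : IsToomGraph E) : Injective (head (E := E)) := by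
  intro g g' h
  rcases g.head_spec with ⟨hg, hge⟩ | ⟨hg, hge⟩ <;>
    rcases g'.head_spec with ⟨hg', hge'⟩ | ⟨hg', hge'⟩ <;> rw [← h] at hge'
  · exact ext_of_edge (hg.trans hg'.symm) (htg.inE_subsingleton 0 _ hge hge')
  · exact (htg.not_inE_zero_and_outE_one _ ⟨⟨_, hge⟩, ⟨_, hge'⟩⟩).elim
  · exact (htg.not_inE_zero_and_outE_one _ ⟨⟨_, hge'⟩, ⟨_, hge⟩⟩).elim
  · exact ext_of_edge (hg.trans hg'.symm) (htg.outE_subsingleton 1 _ hge hge')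

theorem exists_tail_eq_of_outE_zero_or_inE_one {u : V}
    (h : (outE E 0 u).Nonempty ∨ (inE E 1 u).Nonempty) : ∃ g : Dart E, g.tail = u := by
  rcases h with ⟨e, he, rfl⟩ | ⟨e, he, rfl⟩
  · exact ⟨⟨0, e, he⟩, rfl⟩
  · exact ⟨⟨1, e, he⟩, rfl⟩

theorem _root_.IsToomGraph.exists_tail_eq_head (htg : IsToomGraph E) (g : Dart E) :
    ∃ g' : Dart E, g'.tail = g.head := by
  apply exists_tail_eq_of_outE_zero_or_inE_one
  rcases g.head_spec with ⟨-, he⟩ | ⟨-, he⟩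
  · exact htg.outE_zero_or_inE_one_of_inE_zero ⟨_, he⟩
  · exact htg.outE_zero_or_inE_one_of_outE_one ⟨_, he⟩

theorem mem_sources_head_iff (htg : IsToomGraph E) {g g' : Dart E} (h : g'.tail = g.head) :
    g.head ∈ sources E ↔ g.1 = 1 ∧ g'.1 = 0 := by
  rcases g.head_spec with ⟨hg, he⟩ | ⟨hg, he⟩ <;>
    rcases g'.tail_spec with ⟨hg', he'⟩ | ⟨hg', he'⟩ <;> rw [h] at he' <;> simp only [hg, hg']
  · simpa using notMem_sources_of_inE_nonempty ⟨_, he⟩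
  · simpa using notMem_sources_of_inE_nonempty ⟨_, he⟩
  · simpa using htg.mem_sources_of_outE_nonempty ⟨_, he'⟩ ⟨_, he⟩
  · simpa using notMem_sources_of_inE_nonempty ⟨_, he'⟩

theorem mem_sinks_head_iff (htg : IsToomGraph E) {g g' : Dart E} (h : g'.tail = g.head) :
    g.head ∈ sinks E ↔ g.1 = 0 ∧ g'.1 = 1 := by
  rcases g.head_spec with ⟨hg, he⟩ | ⟨hg, he⟩ <;>
    rcases g'.tail_spec with ⟨hg', he'⟩ | ⟨hg', he'⟩ <;> rw [h] at he' <;> simp only [hg, hg']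
  · simpa using notMem_sinks_of_outE_nonempty ⟨_, he'⟩
  · simpa using htg.mem_sinks_of_inE_nonempty ⟨_, he⟩ ⟨_, he'⟩
  · simpa using notMem_sinks_of_outE_nonempty ⟨_, he⟩
  · simpa using notMem_sinks_of_outE_nonempty ⟨_, he⟩

noncomputable def next (htg : IsToomGraph E) (g : Dart E) : Dart E :=
  (htg.exists_tail_eq_head g).choose

theorem tail_next (htg : IsToomGraph E) (g : Dart E) : (next htg g).tail = g.head :=
  (htg.exists_tail_eq_head g).choose_spec

theorem next_eq_iff (htg : IsToomGraph E) {g g' : Dart E} : next htg g = g' ↔ g'.tail = g.head :=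
  ⟨fun h => h ▸ tail_next htg g, fun h => htg.tail_injective ((tail_next htg g).trans h.symm)⟩

theorem next_injective (htg : IsToomGraph E) : Injective (next htg) := fun g g' h =>
  htg.head_injective (by rw [← tail_next htg g, h, tail_next])

theorem exists_tail_eq (htg : IsToomGraph E) (hconn : IsConnectedGraph E) (g₀ : Dart E)
    (u : V) : ∃ g : Dart E, g.tail = u := by
  suffices ∃ g : Dart E, g.tail = u ∨ g.head = u by
    obtain ⟨g, hg | hg⟩ := this
    · exact ⟨g, hg⟩
    · exact ⟨next htg g, (tail_next htg g).trans hg⟩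
  rcases (hconn g₀.tail u).cases_tail with rfl | ⟨_, -, s, he | he⟩
  · exact ⟨g₀, .inl rfl⟩
  · exact ⟨⟨s, _, he⟩, tail_eq_snd_or_head_eq_snd _⟩
  · exact ⟨⟨s, _, he⟩, tail_eq_fst_or_head_eq_fst _⟩

section Cycle

variable [Finite V]

noncomputable def nextPerm (htg : IsToomGraph E) : Equiv.Perm (Dart E) :=
  Equiv.ofBijective _ (Finite.injective_iff_bijective.mp (next_injective htg))

theorem sameCycle_of_incident (htg : IsToomGraph E) {g g' : Dart E} {u : V}
    (hg : g.tail = u ∨ g.head = u) (hg' : g'.tail = u ∨ g'.head = u) :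
    (nextPerm htg).SameCycle g g' := by
  have of_tail_eq_head {g g' : Dart E} (h : g'.tail = g.head) : (nextPerm htg).SameCycle g g' :=
    ⟨1, by simpa [nextPerm] using (next_eq_iff htg).mpr h⟩
  rcases hg with rfl | rfl <;> rcases hg' with hg' | hg'
  · rw [htg.tail_injective hg']
  · exact (of_tail_eq_head hg'.symm).symm
  · exact of_tail_eq_head hg'
  · rw [htg.head_injective hg']

theorem sameCycle_of_isConnectedGraph (htg : IsToomGraph E) (hconn : IsConnectedGraph E)
    (g₀ g : Dart E) : (nextPerm htg).SameCycle g₀ g := by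
  suffices ∀ u, Relation.ReflTransGen (adjE E) g₀.tail u →
      ∀ g : Dart E, g.tail = u ∨ g.head = u → (nextPerm htg).SameCycle g₀ g from
    this _ (hconn _ _) g (.inl rfl)
  intro u hu
  induction hu with
  | refl => exact fun g hg => sameCycle_of_incident htg (.inl rfl) hg
  | tail _ hadj ih =>
    obtain ⟨s, he | he⟩ := hadj
    · let d : Dart E := ⟨s, _, he⟩
      exact fun g hg => (ih d (tail_eq_fst_or_head_eq_fst d)).trans
        (sameCycle_of_incident htg (tail_eq_snd_or_head_eq_snd d) hg)
    · let d : Dart E := ⟨s, _, he⟩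
      exact fun g hg => (ih d (tail_eq_snd_or_head_eq_snd d)).trans
        (sameCycle_of_incident htg (tail_eq_fst_or_head_eq_fst d) hg)

end Cycle

def spatialIncr {d : ℕ} (ψ : V → Pt d) (e : V × V) : Fin d → ℤ := (ψ e.2).1 - (ψ e.1).1

theorem head_eq {d : ℕ} {ψ : V → Pt d} (htime : ∀ s, ∀ e ∈ E s, (ψ e.2).2 = (ψ e.1).2 - 1)
    (g : Dart E) :
    ψ g.head = ψ g.tail +
      if g.1 = 0 then (spatialIncr ψ g.edge, -1) else (-spatialIncr ψ g.edge, 1) := by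
  have ht := htime _ _ g.edge_mem
  unfold head tail spatialIncr
  split_ifs <;> ext <;> simp [ht, sub_eq_add_neg]

end Toom
namespace Toom

open Finset Fin.NatCast

section WalkCode

variable {m d : ℕ} [NeZero m]

/-- The index along a closed walk with charge sequence `c` of the vertex at which the `k`-th
edge starts: edges of charge `1` are traversed backwards. -/
def startIdx (c : Fin m → Fin 2) (k : Fin m) : Fin m := if c k = 0 then k else k + 1

/-- The `j`-th vertex of the walk is a source other than the root. -/
def IsSourceIdx (c : Fin m → Fin 2) (j : Fin m) : Prop := j ≠ 0 ∧ c (j - 1) = 1 ∧ c j = 0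

instance (c : Fin m → Fin 2) : DecidablePred (IsSourceIdx c) :=
  fun _ => inferInstanceAs (Decidable (_ ∧ _ ∧ _))

def IsCircStep (c : Fin m → Fin 2) (k : Fin m) : Prop := IsSourceIdx c (startIdx c k)

instance (c : Fin m → Fin 2) : DecidablePred (IsCircStep c) :=
  fun _ => inferInstanceAs (Decidable (IsSourceIdx c _))

/-- The charge `s` for which the increment of the `k`-th edge has to lie in `A s`. -/
def incrCharge (c : Fin m → Fin 2) (k : Fin m) : Fin 2 := if IsCircStep c k then c k + 1 else c k

theorem isCircStep_iff_of_eq_zero {c : Fin m → Fin 2} {k : Fin m} (hk : c k = 0) :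
    IsCircStep c k ↔ IsSourceIdx c k := by
  simp only [IsCircStep, startIdx, hk, if_true]

theorem isCircStep_iff_of_eq_one {c : Fin m → Fin 2} {k : Fin m} (hk : c k = 1) :
    IsCircStep c k ↔ IsSourceIdx c (k + 1) := by
  simp only [IsCircStep, startIdx, hk, one_ne_zero, if_false]

theorem incrCharge_eq_zero_iff (c : Fin m → Fin 2) (k : Fin m) :
    incrCharge c k = 0 ↔ c k = 0 ∧ ¬IsCircStep c k ∨ c k = 1 ∧ IsCircStep c k := by
  obtain h | h : c k = 0 ∨ c k = 1 := by omega
  all_goals by_cases hc : IsCircStep c k <;> simp [incrCharge, h, hc]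

theorem charge_eq_zero_and_isCircStep_iff (c : Fin m → Fin 2) (k : Fin m) :
    c k = 0 ∧ IsCircStep c k ↔ IsSourceIdx c k :=
  ⟨fun ⟨h, hc⟩ => (isCircStep_iff_of_eq_zero h).mp hc,
    fun hs => ⟨hs.2.2, (isCircStep_iff_of_eq_zero hs.2.2).mpr hs⟩⟩

theorem charge_eq_one_and_isCircStep_iff (c : Fin m → Fin 2) (k : Fin m) :
    c k = 1 ∧ IsCircStep c k ↔ IsSourceIdx c (k + 1) := by
  refine ⟨fun ⟨h, hc⟩ => (isCircStep_iff_of_eq_one h).mp hc, fun hs => ?_⟩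
  have hk : c k = 1 := by simpa using hs.2.1
  exact ⟨hk, (isCircStep_iff_of_eq_one hk).mpr hs⟩

/-- An edge of charge `1` out of a non-root source is followed in the walk by the edge of
charge `0` out of the same source. -/
theorem card_filter_incrCharge_eq_zero (c : Fin m → Fin 2) :
    #{k | incrCharge c k = 0} = #{k | c k = 0} := by
  have hshift : #{k | c k = 1 ∧ IsCircStep c k} = #{k | c k = 0 ∧ IsCircStep c k} :=
    card_equiv (Equiv.addRight 1) fun k => by
      simp [charge_eq_zero_and_isCircStep_iff, charge_eq_one_and_isCircStep_iff]
  calc #{k | incrCharge c k = 0}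
      = #(({k | c k = 0 ∧ ¬IsCircStep c k} : Finset (Fin m)) ∪
          ({k | c k = 1 ∧ IsCircStep c k} : Finset (Fin m))) := by
        rw [← filter_or]; simp only [incrCharge_eq_zero_iff]
    _ = #{k | c k = 0 ∧ ¬IsCircStep c k} + #{k | c k = 1 ∧ IsCircStep c k} :=
        card_union_of_disjoint (disjoint_filter.mpr fun k _ h0 h1 => by simp [h0.1] at h1)
    _ = #{k | c k = 0} := by
        rw [hshift, add_comm, ← filter_filter, ← filter_filter, card_filter_add_card_filter_not]

theorem card_filter_incrCharge_eq_one (c : Fin m → Fin 2) :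
    #{k | incrCharge c k = 1} = m - #{k | c k = 0} := by
  have := card_filter_add_card_filter_not (s := univ) (fun k => incrCharge c k = 0)
  rw [card_univ, Fintype.card_fin] at this
  have hne : #{k | incrCharge c k = 1} = #{k | ¬incrCharge c k = 0} :=
    congrArg card (filter_congr fun k _ => by omega)
  rw [← card_filter_incrCharge_eq_zero]
  omega

variable (m) in
def codes (n : ℕ) (A : Fin 2 → Finset (Fin d → ℤ)) :
    Finset (Σ _ : Fin m → Fin 2, Fin m → Fin d → ℤ) :=
  ({c | c 0 = 0 ∧ #{k | c k = 0} = n} : Finset (Fin m → Fin 2)).sigma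
    fun c => Fintype.piFinset fun k => A (incrCharge c k)

theorem card_codes_le (n : ℕ) (A : Fin 2 → Finset (Fin d → ℤ)) :
    #(codes m n A) ≤ 2 ^ (m - 1) * #(A 0) ^ n * #(A 1) ^ (m - n) := by
  have hprod {c : Fin m → Fin 2} (hc : #{k | c k = 0} = n) :
      ∏ k, #(A (incrCharge c k)) = #(A 0) ^ n * #(A 1) ^ (m - n) := by
    rw [← prod_fiberwise' univ (incrCharge c) (fun s => #(A s)), Fin.prod_univ_two, prod_const,
      prod_const, card_filter_incrCharge_eq_zero, card_filter_incrCharge_eq_one, hc]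
  have hroot : #({c | c 0 = 0} : Finset (Fin m → Fin 2)) = 2 ^ (m - 1) := by
    simpa using Fintype.card_filter_piFinset_const (univ : Finset (Fin 2)) (0 : Fin m) 0
  calc #(codes m n A)
      = ∑ c ∈ ({c | c 0 = 0 ∧ #{k | c k = 0} = n} : Finset (Fin m → Fin 2)),
          #(A 0) ^ n * #(A 1) ^ (m - n) := by
        rw [codes, card_sigma]
        refine sum_congr rfl fun c hc => ?_
        rw [Fintype.card_piFinset, hprod (mem_filter.mp hc).2.2]
    _ ≤ 2 ^ (m - 1) * (#(A 0) ^ n * #(A 1) ^ (m - n)) := by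
        rw [sum_const, smul_eq_mul, ← hroot]
        exact Nat.mul_le_mul_right _ (card_le_card (monotone_filter_right _ fun _ _ h => h.1))
    _ = 2 ^ (m - 1) * #(A 0) ^ n * #(A 1) ^ (m - n) := (mul_assoc _ _ _).symm

def step (c : Fin m → Fin 2) (δ : Fin m → Fin d → ℤ) (k : Fin m) : Pt d :=
  if c k = 0 then (δ k, -1) else (-δ k, 1)

def pos (c : Fin m → Fin 2) (δ : Fin m → Fin d → ℤ) (j : Fin m) : Pt d :=
  ∑ i ∈ range j, step c δ (i : Fin m)

def edgePts (c : Fin m → Fin 2) (δ : Fin m → Fin d → ℤ) (k : Fin m) : Pt d × Pt d :=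
  if c k = 0 then (pos c δ k, pos c δ (k + 1)) else (pos c δ (k + 1), pos c δ k)

/-- The invariant data of the contour traced by the closed walk from the origin whose `k`-th
step has charge `c k` and spatial increment `δ k`: sinks, edges starting at internal vertices
or the root, and edges starting at other sources. -/
def decode (c : Fin m → Fin 2) (δ : Fin m → Fin d → ℤ) :
    Set (Pt d) × (Fin 2 → Set (Pt d × Pt d)) × (Fin 2 → Set (Pt d × Pt d)) :=
  (pos c δ '' {j | c (j - 1) = 0 ∧ c j = 1},
    fun s => edgePts c δ '' {k | c k = s ∧ ¬IsCircStep c k},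
    fun s => edgePts c δ '' {k | c k = s ∧ IsCircStep c k})

end WalkCode

end Toom

namespace Toom

open Finset Fin.NatCast Dart

variable {V : Type*} {E : Fin 2 → Set (V × V)} {m : ℕ} [NeZero m]

structure IsTour (w : Fin m → Dart E) (v₀ : V) : Prop where
  bijective : Bijective w
  tail_zero : (w 0).tail = v₀
  tail_add_one (j : Fin m) : (w (j + 1)).tail = (w j).head

theorem exists_isTour [Finite V] (htg : IsToomGraph E) (hconn : IsConnectedGraph E)
    (hm : Nat.card (Dart E) = m) (g₀ : Dart E) : ∃ w : Fin m → Dart E, IsTour w g₀.tail := by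
  obtain ⟨w, hw, h0, hnext⟩ :=
    Equiv.Perm.exists_bijective_orbit (sameCycle_of_isConnectedGraph htg hconn g₀) hm
  exact ⟨w, ⟨hw, h0 ▸ rfl, fun j => (hnext j).symm ▸ tail_next htg _⟩⟩

namespace IsTour

variable {w : Fin m → Dart E} {v₀ : V} (hw : IsTour w v₀)
include hw

theorem head_sub_one (j : Fin m) : (w (j - 1)).head = (w j).tail := by
  rw [← hw.tail_add_one, sub_add_cancel]

theorem exists_tail_eq (htg : IsToomGraph E) (hconn : IsConnectedGraph E) (u : V) :
    ∃ j, (w j).tail = u := by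
  obtain ⟨g, rfl⟩ := Toom.exists_tail_eq htg hconn (w 0) u
  obtain ⟨j, rfl⟩ := hw.bijective.2 g
  exact ⟨j, rfl⟩

theorem tail_eq_root_iff (htg : IsToomGraph E) (j : Fin m) : (w j).tail = v₀ ↔ j = 0 := by
  rw [← hw.tail_zero]; exact (htg.tail_injective.comp hw.bijective.1).eq_iff

theorem mem_sinks_iff (htg : IsToomGraph E) (j : Fin m) :
    (w j).tail ∈ sinks E ↔ (w (j - 1)).1 = 0 ∧ (w j).1 = 1 := by
  rw [← hw.head_sub_one]; exact mem_sinks_head_iff htg (hw.head_sub_one j).symm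

theorem isSourceIdx_iff (htg : IsToomGraph E) (j : Fin m) :
    IsSourceIdx (fun k => (w k).1) j ↔ (w j).tail ∈ sources E ∧ (w j).tail ≠ v₀ := by
  rw [← hw.head_sub_one, mem_sources_head_iff htg (hw.head_sub_one j).symm, hw.head_sub_one,
    Ne, hw.tail_eq_root_iff htg, IsSourceIdx]
  tauto

theorem edge_fst (k : Fin m) : (w k).edge.1 = (w (startIdx (fun j => (w j).1) k)).tail := by
  rw [edge_eq, startIdx]
  split_ifs <;> simp [hw.tail_add_one]

theorem edge_mem_Ecirc_iff (htg : IsToomGraph E) (k : Fin m) :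
    (w k).edge ∈ Ecirc E v₀ (w k).1 ↔ IsCircStep (fun j => (w j).1) k := by
  rw [IsCircStep, hw.isSourceIdx_iff htg, ← hw.edge_fst]
  exact and_iff_right (w k).edge_mem

theorem edge_mem_Estar_iff (htg : IsToomGraph E) (k : Fin m) :
    (w k).edge ∈ Estar E v₀ (w k).1 ↔ ¬IsCircStep (fun j => (w j).1) k := by
  rw [htg.mem_Estar_iff (w k).edge_mem, hw.edge_mem_Ecirc_iff htg]

theorem charge_zero (hsrc : v₀ ∈ sources E) : (w 0).1 = 0 := by
  rcases (w 0).tail_spec with ⟨h, -⟩ | ⟨-, he⟩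
  · exact h
  · rw [hw.tail_zero] at he
    exact absurd hsrc (notMem_sources_of_inE_nonempty ⟨_, he⟩)

theorem card_charge_eq_zero : #{k | (w k).1 = 0} = (E 0).ncard := by
  rw [← Fintype.card_subtype, ← Nat.card_eq_fintype_card, ← Nat.card_coe_set_eq,
    ← Nat.card_congr (Equiv.sigmaSubtype (β := fun s => E s) 0)]
  exact Nat.card_congr ((Equiv.ofBijective w hw.bijective).subtypeEquiv fun _ => Iff.rfl)

variable {d : ℕ} {ψ : V → Pt d}

theorem tail_eq_pos (htime : ∀ s, ∀ e ∈ E s, (ψ e.2).2 = (ψ e.1).2 - 1) (hroot : ψ v₀ = 0)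
    (j : Fin m) :
    ψ (w j).tail = pos (fun k => (w k).1) (fun k => spatialIncr ψ (w k).edge) j := by
  suffices ∀ k : ℕ, ψ (w k).tail =
      ∑ i ∈ range k, step (fun k => (w k).1) (fun k => spatialIncr ψ (w k).edge) (i : Fin m) by
    simpa [pos] using this j
  intro k
  induction k with
  | zero => simp [hw.tail_zero, hroot]
  | succ k ih => rw [Nat.cast_succ, hw.tail_add_one, head_eq htime, ih, sum_range_succ, step]

theorem edgePts_eq (htime : ∀ s, ∀ e ∈ E s, (ψ e.2).2 = (ψ e.1).2 - 1) (hroot : ψ v₀ = 0)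
    (k : Fin m) :
    edgePts (fun k => (w k).1) (fun k => spatialIncr ψ (w k).edge) k =
      (ψ (w k).edge.1, ψ (w k).edge.2) := by
  rw [edgePts, ← hw.tail_eq_pos htime hroot, ← hw.tail_eq_pos htime hroot, hw.tail_add_one,
    edge_eq]
  split_ifs <;> rfl

theorem image_sinks (htg : IsToomGraph E) (hconn : IsConnectedGraph E)
    (htime : ∀ s, ∀ e ∈ E s, (ψ e.2).2 = (ψ e.1).2 - 1) (hroot : ψ v₀ = 0) :
    ψ '' sinks E = pos (fun k => (w k).1) (fun k => spatialIncr ψ (w k).edge) ''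
      {j | (w (j - 1)).1 = 0 ∧ (w j).1 = 1} := by
  have hsinks : sinks E = (fun j => (w j).tail) '' {j | (w (j - 1)).1 = 0 ∧ (w j).1 = 1} := by
    ext u
    obtain ⟨j, rfl⟩ := hw.exists_tail_eq htg hconn u
    refine ⟨fun hu => ⟨j, (hw.mem_sinks_iff htg j).mp hu, rfl⟩, ?_⟩
    rintro ⟨i, hi, hij⟩
    exact hij ▸ (hw.mem_sinks_iff htg i).mpr hi
  rw [hsinks, Set.image_image]
  exact Set.image_congr fun j _ => hw.tail_eq_pos htime hroot j

theorem image_edges (htime : ∀ s, ∀ e ∈ E s, (ψ e.2).2 = (ψ e.1).2 - 1) (hroot : ψ v₀ = 0)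
    {s : Fin 2} {S : Set (V × V)} (hS : S ⊆ E s) :
    (fun e : V × V => (ψ e.1, ψ e.2)) '' S =
      edgePts (fun k => (w k).1) (fun k => spatialIncr ψ (w k).edge) ''
        {k | (w k).1 = s ∧ (w k).edge ∈ S} := by
  ext p
  constructor
  · rintro ⟨e, he, rfl⟩
    obtain ⟨k, hk⟩ := hw.bijective.2 ⟨s, e, hS he⟩
    refine ⟨k, ?_, by rw [hw.edgePts_eq htime hroot, hk]; rfl⟩
    change (w k).1 = s ∧ (w k).edge ∈ S
    rw [hk]
    exact ⟨rfl, he⟩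
  · rintro ⟨k, ⟨-, hk⟩, rfl⟩
    exact ⟨_, hk, (hw.edgePts_eq htime hroot k).symm⟩

theorem decode_eq (htg : IsToomGraph E) (hconn : IsConnectedGraph E)
    (htime : ∀ s, ∀ e ∈ E s, (ψ e.2).2 = (ψ e.1).2 - 1) (hroot : ψ v₀ = 0) :
    decode (fun k => (w k).1) (fun k => spatialIncr ψ (w k).edge) =
      (ψ '' sinks E, fun s => (fun e : V × V => (ψ e.1, ψ e.2)) '' Estar E v₀ s,
        fun s => (fun e : V × V => (ψ e.1, ψ e.2)) '' Ecirc E v₀ s) := by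
  simp only [decode, Prod.mk.injEq]
  refine ⟨(hw.image_sinks htg hconn htime hroot).symm, funext fun s => ?_, funext fun s => ?_⟩
  · rw [hw.image_edges htime hroot fun e he => he.1]
    refine congrArg _ (Set.ext fun k => and_congr_right fun hk => ?_)
    exact (hk ▸ hw.edge_mem_Estar_iff htg k).symm
  · rw [hw.image_edges htime hroot fun e he => he.1]
    refine congrArg _ (Set.ext fun k => and_congr_right fun hk => ?_)
    exact (hk ▸ hw.edge_mem_Ecirc_iff htg k).symm

theorem mem_codes (htg : IsToomGraph E) {n : ℕ} {A : Fin 2 → Finset (Fin d → ℤ)}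
    (hsrc : v₀ ∈ sources E) (hcard : (E 0).ncard = n)
    (hstar : ∀ s, ∀ e ∈ Estar E v₀ s, (ψ e.2).1 - (ψ e.1).1 ∈ A s)
    (hcirc : ∀ s, ∀ e ∈ Ecirc E v₀ s, (ψ e.2).1 - (ψ e.1).1 ∈ A (s + 1)) :
    ⟨fun k => (w k).1, fun k => spatialIncr ψ (w k).edge⟩ ∈ codes m n A := by
  simp only [codes, mem_sigma, mem_filter, mem_univ, true_and, Fintype.mem_piFinset]
  refine ⟨⟨hw.charge_zero hsrc, hw.card_charge_eq_zero.trans hcard⟩, fun k => ?_⟩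
  unfold incrCharge
  split_ifs with h
  · exact hcirc _ _ ((hw.edge_mem_Ecirc_iff htg k).mpr h)
  · exact hstar _ _ ((hw.edge_mem_Estar_iff htg k).mpr h)

end IsTour

end Toom
namespace Toom

open Finset

theorem exists_mem_codes_decode_eq {V : Type*} [Finite V] {E : Fin 2 → Set (V × V)} {v₀ : V}
    {d n : ℕ} [NeZero (2 * n)] {ψ : V → Pt d} {A : Fin 2 → Finset (Fin d → ℤ)}
    (hctr : IsToomContour E v₀ ψ) (hroot : ψ v₀ = 0)
    (hstar : ∀ s, ∀ e ∈ Estar E v₀ s, (ψ e.2).1 - (ψ e.1).1 ∈ A s)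
    (hcirc : ∀ s, ∀ e ∈ Ecirc E v₀ s, (ψ e.2).1 - (ψ e.1).1 ∈ A (s + 1))
    (hcard : ∀ s, (E s).ncard = n) :
    ∃ x ∈ codes (2 * n) n A, decode x.1 x.2 =
      (ψ '' sinks E, fun s => (fun e : V × V => (ψ e.1, ψ e.2)) '' Estar E v₀ s,
        fun s => (fun e : V × V => (ψ e.1, ψ e.2)) '' Ecirc E v₀ s) := by
  obtain ⟨htg, hconn, hsrc, ⟨htime, -, -⟩, -⟩ := hctr
  have hdarts : Nat.card (Dart E) = 2 * n := by
    rw [Nat.card_sigma, Fin.sum_univ_two, Nat.card_coe_set_eq, Nat.card_coe_set_eq, hcard, hcard,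
      two_mul]
  obtain ⟨e, he⟩ : (E 0).Nonempty :=
    Set.nonempty_of_ncard_ne_zero (hcard 0 ▸ right_ne_zero_of_mul (NeZero.ne (2 * n)))
  obtain ⟨g₀, rfl⟩ := exists_tail_eq htg hconn ⟨0, e, he⟩ v₀
  obtain ⟨w, hw⟩ := exists_isTour htg hconn hdarts g₀
  exact ⟨_, hw.mem_codes htg hsrc (hcard 0) hstar hcirc, hw.decode_eq htg hconn htime hroot⟩

theorem ncount''_le (d n : ℕ) [NeZero (2 * n)] (A : Fin 2 → Finset (Fin d → ℤ)) :
    Ncount'' d n A ≤ 2 ^ (2 * n - 1) * #(A 0) ^ n * #(A 1) ^ n := by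
  have hcodes := card_codes_le (m := 2 * n) n A
  rw [show 2 * n - n = n by omega] at hcodes
  calc Ncount'' d n A
      ≤ ((fun x : Σ _ : Fin (2 * n) → Fin 2, Fin (2 * n) → Fin d → ℤ => decode x.1 x.2) ''
          ↑(codes (2 * n) n A)).ncard := by
        refine Set.ncard_le_ncard ?_ ((codes (2 * n) n A).finite_toSet.image _)
        rintro data ⟨V, _, E, v₀, ψ, hctr, hroot, hstar, hcirc, -, hcard, h1, h2, h3⟩
        obtain ⟨x, hx, hdec⟩ := exists_mem_codes_decode_eq hctr hroot hstar hcirc hcard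
        exact ⟨x, hx, hdec.trans (Prod.ext h1.symm (Prod.ext h2.symm h3.symm))⟩
    _ ≤ #(codes (2 * n) n A) :=
        (Set.ncard_image_le (finite_toSet _)).trans (Set.ncard_coe_finset _).le
    _ ≤ _ := hcodes

end Toom

theorem stmt12_general {d : ℕ}
    (A : Fin 2 → Finset (Fin d → ℤ))
    (M₁ M₂ : ℕ) (hM₁ : M₁ = (A 0).card) (hM₂ : M₂ = (A 1).card)
    (n : ℕ) (hn : 1 ≤ n) :
    ((Ncount'' d n A : ℝ)) ≤ (1 / 2 : ℝ) * (4 * (M₁ : ℝ) * (M₂ : ℝ)) ^ n := by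
  have : NeZero (2 * n) := ⟨by omega⟩
  have hpow : (2 : ℝ) ^ (2 * n - 1) * 2 = 4 ^ n := by
    rw [← pow_succ, Nat.sub_add_cancel (by omega), pow_mul]; norm_num
  calc (Ncount'' d n A : ℝ) ≤ (2 ^ (2 * n - 1) * M₁ ^ n * M₂ ^ n : ℕ) := by
        subst hM₁ hM₂; exact_mod_cast Toom.ncount''_le d n A
    _ = 1 / 2 * (4 * (M₁ : ℝ) * M₂) ^ n := by
        rw [mul_pow, mul_pow, ← hpow]; push_cast; ring

/-- Exponential bound for Toom contours with two charges:
`N''_n ≤ (1/2)(4 M₁ M₂)^n` where `M_s = |A_s(φ)|`. -/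
theorem stmt12 {d : ℕ} (φ : Conf d → Bool)
    (hloc : IsLocal φ) (hmono : IsMonotoneMap φ) (hnc : ∃ x y : Conf d, φ x ≠ φ y)
    (A : Fin 2 → Finset (Fin d → ℤ)) (hA : ∀ s, A s ∈ minUp φ)
    (M₁ M₂ : ℕ) (hM₁ : M₁ = (A 0).card) (hM₂ : M₂ = (A 1).card)
    (n : ℕ) (hn : 1 ≤ n) :
    ((Ncount'' d n A : ℝ)) ≤ (1 / 2 : ℝ) * (4 * (M₁ : ℝ) * (M₂ : ℝ)) ^ n :=
  stmt12_general A M₁ M₂ hM₁ hM₂ n hn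
end
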